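/- arXiv:2012.03083 — 8 statements merged into one kernel-verified Lean document; each statement's English description precedes it below -/
import Mathlib

section
/- Let ι be a nonempty finite type, α ∈ [0,1), β > 0, let r : ℝ → ι → ℝ be continuous, and let x : ℝ → ι → ℝ be a trajectory of the single-agent SQL dynamics for (α, β, r). Then for every choice distribution p (p_i ≥ 0 for all i and ∑_i p_i = 1) and every T ≥ 0, ∫₀ᵀ (u^H(p,t) − u^H(x(t),t)) dt ≤ −∑_i p_i · ln x_i(0). In particular, the modified regret R^H(T) := sup over choice distributions p of ∫₀ᵀ (u^H(p,t) − u^H(x(t),t)) dt satisfies R^H(T) ≤ max_i (−ln x_i(0)) for all T ≥ 0, a constant independent of T. -/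
/-!
Along an SQL trajectory the cross-entropy `L(t) = ∑ᵢ pᵢ log xᵢ(t)` has derivative
`∑ᵢ pᵢ gᵢ(t)`, where `gᵢ = x'ᵢ / xᵢ` is the growth rate of action `i`. Expanding `gᵢ` and
applying Gibbs' inequality `∑ᵢ pᵢ log xᵢ ≤ ∑ᵢ pᵢ log pᵢ` shows that this derivative dominates
the instantaneous modified regret `u^H(p,t) - u^H(x(t),t)`. Integrating, the regret up to
time `T` is at most `L(T) - L(0) ≤ -L(0)`, because `L ≤ 0` on the simplex.
-/

open Real

section Simplex

variable {ι : Type*} [Fintype ι]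

lemma mul_log_sub_mul_log_le_sub {p q : ℝ} (hp : 0 ≤ p) (hq : 0 < q) :
    p * log q - p * log p ≤ q - p := by
  rcases hp.eq_or_lt with rfl | hp
  · simpa using hq.le
  calc p * log q - p * log p = p * log (q / p) := by rw [log_div hq.ne' hp.ne']; ring
    _ ≤ p * (q / p - 1) := by gcongr; exact log_le_sub_one_of_pos (div_pos hq hp)
    _ = q - p := by field_simp

lemma sum_mul_log_le_sum_mul_log {p q : ι → ℝ} (hp : ∀ i, 0 ≤ p i) (hq : ∀ i, 0 < q i)
    (hqp : ∑ i, q i ≤ ∑ i, p i) :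
    ∑ i, p i * log (q i) ≤ ∑ i, p i * log (p i) := by
  have h := Finset.sum_le_sum fun i (_ : i ∈ Finset.univ) =>
    mul_log_sub_mul_log_le_sub (hp i) (hq i)
  rw [Finset.sum_sub_distrib, Finset.sum_sub_distrib] at h
  linarith

lemma sum_mul_log_nonpos {p q : ι → ℝ} (hp : ∀ i, 0 ≤ p i) (hq : ∀ i, 0 ≤ q i)
    (hqs : ∑ i, q i ≤ 1) : ∑ i, p i * log (q i) ≤ 0 :=
  Finset.sum_nonpos fun i _ => mul_nonpos_of_nonneg_of_nonpos (hp i) <| log_nonpos (hq i) <|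
    (Finset.single_le_sum (fun j _ => hq j) (Finset.mem_univ i)).trans hqs

lemma sum_mul_le_sup' [Nonempty ι] {p : ι → ℝ} (hp : ∀ i, 0 ≤ p i) (hps : ∑ i, p i = 1)
    (f : ι → ℝ) : ∑ i, p i * f i ≤ Finset.univ.sup' Finset.univ_nonempty f :=
  calc ∑ i, p i * f i ≤ ∑ i, p i * Finset.univ.sup' Finset.univ_nonempty f :=
        Finset.sum_le_sum fun i _ =>
          mul_le_mul_of_nonneg_left (Finset.le_sup' f (Finset.mem_univ i)) (hp i)
    _ = Finset.univ.sup' Finset.univ_nonempty f := by rw [← Finset.sum_mul, hps, one_mul]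

lemma hasDerivAt_sum_mul_log (p : ι → ℝ) {x : ℝ → ι → ℝ} {x' : ι → ℝ} {t : ℝ}
    (hx : ∀ i, HasDerivAt (fun s => x s i) (x' i) t) (hpos : ∀ i, x t i ≠ 0) :
    HasDerivAt (fun s => ∑ i, p i * log (x s i)) (∑ i, p i * (x' i / x t i)) t :=
  HasDerivAt.fun_sum fun i _ => ((hx i).log (hpos i)).const_mul (p i)

end Simplex

namespace SQL

variable {ι : Type*} [Fintype ι]

noncomputable def modifiedUtility (α β : ℝ) (r q : ι → ℝ) : ℝ :=
  β * ∑ i, q i * r i - α * ∑ i, q i * log (q i)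

/-- The SQL dynamics read `x'ᵢ = xᵢ * growthRate α β r x i`. -/
noncomputable def growthRate (α β : ℝ) (r q : ι → ℝ) (i : ι) : ℝ :=
  β * (r i - ∑ j, q j * r j) - α * (log (q i) - ∑ j, q j * log (q j))

lemma modifiedUtility_sub_le_sum_mul_growthRate {α : ℝ} (β : ℝ) (hα : 0 ≤ α) (r : ι → ℝ)
    {p q : ι → ℝ} (hp : ∀ i, 0 ≤ p i) (hps : ∑ i, p i = 1) (hq : ∀ i, 0 < q i)
    (hqs : ∑ i, q i ≤ 1) :
    modifiedUtility α β r p - modifiedUtility α β r q ≤ ∑ i, p i * growthRate α β r q i := by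
  have hexpand : ∑ i, p i * growthRate α β r q i = modifiedUtility α β r p
      - modifiedUtility α β r q + α * (∑ i, p i * log (p i) - ∑ i, p i * log (q i)) := by
    simp only [modifiedUtility, growthRate, mul_sub, Finset.sum_sub_distrib, ← Finset.sum_mul,
      mul_left_comm (p _), ← Finset.mul_sum, hps]
    ring
  have hgibbs := sum_mul_log_le_sum_mul_log hp hq (hqs.trans_eq hps.symm)
  rw [hexpand]
  nlinarith

theorem integral_modifiedUtility_sub_le {α β : ℝ} (hα : 0 ≤ α) {r : ℝ → ι → ℝ}
    (hr : ∀ i, Continuous fun t => r t i) {x : ℝ → ι → ℝ}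
    (hxdiff : ∀ i, Differentiable ℝ fun t => x t i) (hxpos : ∀ t ≥ (0 : ℝ), ∀ i, 0 < x t i)
    (hxsum : ∀ t ≥ (0 : ℝ), ∑ i, x t i = 1)
    (hode : ∀ t ≥ (0 : ℝ), ∀ i,
      deriv (fun s => x s i) t = x t i * growthRate α β (r t) (x t) i)
    (p : ι → ℝ) (hp : ∀ i, 0 ≤ p i) (hps : ∑ i, p i = 1) (T : ℝ) (hT : 0 ≤ T) :
    ∫ t in (0 : ℝ)..T, (modifiedUtility α β (r t) p - modifiedUtility α β (r t) (x t))
      ≤ -∑ i, p i * log (x 0 i) := by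
  set L : ℝ → ℝ := fun t => ∑ i, p i * log (x t i)
  have hL : ∀ t ≥ (0 : ℝ), HasDerivAt L (∑ i, p i * growthRate α β (r t) (x t) i) t := by
    intro t ht
    convert hasDerivAt_sum_mul_log p (fun i => (hxdiff i t).hasDerivAt)
      fun i => (hxpos t ht i).ne' using 3 with i
    rw [hode t ht i, mul_div_cancel_left₀ _ (hxpos t ht i).ne']
  have hregret_cont :
      Continuous fun t => modifiedUtility α β (r t) p - modifiedUtility α β (r t) (x t) := by
    have hx : ∀ i, Continuous fun t => x t i := fun i => (hxdiff i).continuous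
    unfold modifiedUtility
    fun_prop
  have hLT : L T ≤ 0 :=
    sum_mul_log_nonpos hp (fun i => (hxpos T hT i).le) (hxsum T hT).le
  calc ∫ t in (0 : ℝ)..T, (modifiedUtility α β (r t) p - modifiedUtility α β (r t) (x t))
      ≤ L T - L 0 :=
        intervalIntegral.integral_le_sub_of_hasDeriv_right_of_le hT
          (fun t ht => (hL t ht.1).continuousAt.continuousWithinAt)
          (fun t ht => (hL t ht.1.le).hasDerivWithinAt) hregret_cont.integrableOn_Icc
          fun t ht => modifiedUtility_sub_le_sum_mul_growthRate β hα (r t) hp hps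
            (hxpos t ht.1.le) (hxsum t ht.1.le).le
    _ ≤ -L 0 := by linarith

end SQL

open SQL in
theorem sql_bounded_regret_general {ι : Type*} [Fintype ι] [Nonempty ι]
    (α β : ℝ) (hα₀ : 0 ≤ α)
    (r : ℝ → ι → ℝ) (hr : ∀ i, Continuous fun t => r t i)
    (x : ℝ → ι → ℝ) (hxdiff : ∀ i, Differentiable ℝ fun t => x t i)
    (hxpos : ∀ t ≥ (0 : ℝ), ∀ i, 0 < x t i)
    (hxsum : ∀ t ≥ (0 : ℝ), ∑ i, x t i = 1)
    (hode : ∀ t ≥ (0 : ℝ), ∀ i, deriv (fun s => x s i) t =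
      x t i * (β * (r t i - ∑ j, x t j * r t j)
        - α * (Real.log (x t i) - ∑ j, x t j * Real.log (x t j)))) :
    (∀ p : ι → ℝ, (∀ i, 0 ≤ p i) → ∑ i, p i = 1 → ∀ T ≥ (0 : ℝ),
      (∫ t in (0:ℝ)..T,
          ((β * ∑ i, p i * r t i - α * ∑ i, p i * Real.log (p i))
            - (β * ∑ i, x t i * r t i - α * ∑ i, x t i * Real.log (x t i))))
        ≤ -∑ i, p i * Real.log (x 0 i)) ∧
    (∀ T ≥ (0 : ℝ),
      sSup {R : ℝ | ∃ p : ι → ℝ, (∀ i, 0 ≤ p i) ∧ (∑ i, p i = 1) ∧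
          R = ∫ t in (0:ℝ)..T,
              ((β * ∑ i, p i * r t i - α * ∑ i, p i * Real.log (p i))
                - (β * ∑ i, x t i * r t i - α * ∑ i, x t i * Real.log (x t i)))}
        ≤ Finset.univ.sup' Finset.univ_nonempty (fun i => -Real.log (x 0 i))) := by
  have hregret := integral_modifiedUtility_sub_le hα₀ hr hxdiff hxpos hxsum hode
  refine ⟨hregret, fun T hT => csSup_le ?_ ?_⟩
  · exact ⟨_, fun _ => (Fintype.card ι : ℝ)⁻¹, fun _ => by positivity, by simp, rfl⟩
  · rintro _ ⟨p, hp, hps, rfl⟩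
    refine (hregret p hp hps T hT).trans ?_
    simpa only [mul_neg, Finset.sum_neg_distrib] using sum_mul_le_sup' hp hps fun i => -log (x 0 i)

/-- **Bounded regret of single-agent SQL dynamics.**
For a trajectory `x` of the single-agent smooth Q-learning dynamics with
parameters `α ∈ [0,1)`, `β > 0` and continuous reward `r`, the modified regret
against any fixed choice distribution `p` up to any time `T ≥ 0` is bounded by
`-∑ i, p i * log (x 0 i)`; in particular the supremum over all `p` is bounded
by `max_i (-log (x 0 i))`, a constant independent of `T`. -/
theorem sql_bounded_regret {ι : Type*} [Fintype ι] [Nonempty ι]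
    (α β : ℝ) (hα₀ : 0 ≤ α) (hα₁ : α < 1) (hβ : 0 < β)
    (r : ℝ → ι → ℝ) (hr : ∀ i, Continuous fun t => r t i)
    (x : ℝ → ι → ℝ) (hxdiff : ∀ i, Differentiable ℝ fun t => x t i)
    (hxpos : ∀ t ≥ (0 : ℝ), ∀ i, 0 < x t i)
    (hxsum : ∀ t ≥ (0 : ℝ), ∑ i, x t i = 1)
    (hode : ∀ t ≥ (0 : ℝ), ∀ i, deriv (fun s => x s i) t =
      x t i * (β * (r t i - ∑ j, x t j * r t j)
        - α * (Real.log (x t i) - ∑ j, x t j * Real.log (x t j)))) :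
    (∀ p : ι → ℝ, (∀ i, 0 ≤ p i) → ∑ i, p i = 1 → ∀ T ≥ (0 : ℝ),
      (∫ t in (0:ℝ)..T,
          ((β * ∑ i, p i * r t i - α * ∑ i, p i * Real.log (p i))
            - (β * ∑ i, x t i * r t i - α * ∑ i, x t i * Real.log (x t i))))
        ≤ -∑ i, p i * Real.log (x 0 i)) ∧
    (∀ T ≥ (0 : ℝ),
      sSup {R : ℝ | ∃ p : ι → ℝ, (∀ i, 0 ≤ p i) ∧ (∑ i, p i = 1) ∧
          R = ∫ t in (0:ℝ)..T,
              ((β * ∑ i, p i * r t i - α * ∑ i, p i * Real.log (p i))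
                - (β * ∑ i, x t i * r t i - α * ∑ i, x t i * Real.log (x t i)))}
        ≤ Finset.univ.sup' Finset.univ_nonempty (fun i => -Real.log (x 0 i))) :=
  sql_bounded_regret_general α β hα₀ r hr x hxdiff hxpos hxsum hode
end

section
/- Let ι be a nonempty finite type, α ∈ [0,1), β > 0, let r : ℝ → ι → ℝ be continuous, and let x : ℝ → ι → ℝ be a trajectory of the single-agent SQL dynamics for (α, β, r). Then for every choice distribution p (p_i ≥ 0 for all i and ∑_i p_i = 1) and every t ≥ 0, the function s ↦ ∑_i p_i · ln x_i(s) is differentiable at t and its derivative satisfies d/dt ∑_i p_i · ln x_i(t) ≥ u^H(p,t) − u^H(x(t),t). -/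
/-!
Along the trajectory `d/dt ln xᵢ = β (rᵢ - ⟨x, r⟩) - α (ln xᵢ - ⟨x, ln x⟩)`, so averaging with the
weights `p` gives `u^H(p) - u^H(x) + α (∑ pᵢ ln pᵢ - ∑ pᵢ ln xᵢ)`. The last term is `α` times the
Kullback–Leibler divergence of `p` from `x`, which is nonnegative by Gibbs' inequality.
-/

open Finset

namespace Real

lemma mul_log_sub_mul_log_le {p q : ℝ} (hp : 0 ≤ p) (hq : 0 < q) :
    p * log q - p * log p ≤ q - p := by
  rcases hp.eq_or_lt with rfl | hp
  · simpa using hq.le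
  have h := log_le_sub_one_of_pos (div_pos hq hp)
  rw [log_div hq.ne' hp.ne'] at h
  calc p * log q - p * log p = p * (log q - log p) := by ring
    _ ≤ p * (q / p - 1) := mul_le_mul_of_nonneg_left h hp.le
    _ = q - p := by field_simp

theorem sum_mul_log_le_sum_mul_log {ι : Type*} {s : Finset ι} {p q : ι → ℝ}
    (hp : ∀ i ∈ s, 0 ≤ p i) (hq : ∀ i ∈ s, 0 < q i) (hqp : ∑ i ∈ s, q i ≤ ∑ i ∈ s, p i) :
    ∑ i ∈ s, p i * log (q i) ≤ ∑ i ∈ s, p i * log (p i) := by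
  have h := sum_le_sum fun i hi => mul_log_sub_mul_log_le (hp i hi) (hq i hi)
  simp only [sum_sub_distrib] at h
  linarith

end Real

lemma HasDerivAt.log_of_eq_mul {f : ℝ → ℝ} {g t : ℝ} (hf : HasDerivAt f (f t * g) t)
    (ht : 0 < f t) : HasDerivAt (fun s => Real.log (f s)) g t := by
  simpa [mul_div_cancel_left₀ _ ht.ne'] using hf.log ht.ne'

lemma sum_mul_sub_sub_mul_sub {ι : Type*} {s : Finset ι} {p a b : ι → ℝ} {α β A B : ℝ}
    (hp : ∑ i ∈ s, p i = 1) :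
    ∑ i ∈ s, p i * (β * (a i - A) - α * (b i - B)) =
      β * ∑ i ∈ s, p i * a i - β * A - α * ∑ i ∈ s, p i * b i + α * B := by
  have h : ∀ i ∈ s, p i * (β * (a i - A) - α * (b i - B)) =
      β * (p i * a i) - α * (p i * b i) + (α * B - β * A) * p i := fun i _ => by ring
  rw [sum_congr rfl h, sum_add_distrib, sum_sub_distrib, ← mul_sum, ← mul_sum, ← mul_sum, hp]
  ring

theorem sql_kl_derivative_bound_general {ι : Type*} [Fintype ι]
    (α β : ℝ) (hα₀ : 0 ≤ α)
    (r : ℝ → ι → ℝ)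
    (x : ℝ → ι → ℝ) (hxdiff : ∀ i, Differentiable ℝ fun t => x t i)
    (hxpos : ∀ t ≥ (0 : ℝ), ∀ i, 0 < x t i)
    (hxsum : ∀ t ≥ (0 : ℝ), ∑ i, x t i = 1)
    (hode : ∀ t ≥ (0 : ℝ), ∀ i, deriv (fun s => x s i) t =
      x t i * (β * (r t i - ∑ j, x t j * r t j)
        - α * (Real.log (x t i) - ∑ j, x t j * Real.log (x t j))))
    (p : ι → ℝ) (hp₀ : ∀ i, 0 ≤ p i) (hp₁ : ∑ i, p i = 1)
    (t : ℝ) (ht : 0 ≤ t) :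
    DifferentiableAt ℝ (fun s => ∑ i, p i * Real.log (x s i)) t ∧
    deriv (fun s => ∑ i, p i * Real.log (x s i)) t ≥
      (β * ∑ i, p i * r t i - α * ∑ i, p i * Real.log (p i))
        - (β * ∑ i, x t i * r t i - α * ∑ i, x t i * Real.log (x t i)) := by
  set R := ∑ j, x t j * r t j
  set L := ∑ j, x t j * Real.log (x t j)
  have hlog (i : ι) : HasDerivAt (fun s => Real.log (x s i))
      (β * (r t i - R) - α * (Real.log (x t i) - L)) t :=
    .log_of_eq_mul (hode t ht i ▸ (hxdiff i t).hasDerivAt) (hxpos t ht i)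
  have hsum : HasDerivAt (fun s => ∑ i, p i * Real.log (x s i))
      (∑ i, p i * (β * (r t i - R) - α * (Real.log (x t i) - L))) t :=
    .fun_sum fun i _ => (hlog i).const_mul (p i)
  have gibbs : ∑ i, p i * Real.log (x t i) ≤ ∑ i, p i * Real.log (p i) :=
    Real.sum_mul_log_le_sum_mul_log (fun i _ => hp₀ i) (fun i _ => hxpos t ht i)
      (by rw [hxsum t ht, hp₁])
  refine ⟨hsum.differentiableAt, ?_⟩
  rw [hsum.deriv, sum_mul_sub_sub_mul_sub hp₁]
  linarith [mul_le_mul_of_nonneg_left gibbs hα₀]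

/-- **Key derivative inequality in the regret proof for single-agent SQL dynamics.**
Along a trajectory `x` of the single-agent smooth Q-learning dynamics with
parameters `α ∈ [0,1)`, `β > 0` and continuous reward `r`, for any fixed choice
distribution `p` and any `t ≥ 0` the function `s ↦ ∑ i, p i * log (x s i)` is
differentiable at `t` and its derivative is at least
`u^H(p,t) − u^H(x t, t)`, where `u^H(q,t) = β ∑ q_i r_i(t) − α ∑ q_i ln q_i`. -/
theorem sql_kl_derivative_bound {ι : Type*} [Fintype ι] [Nonempty ι]
    (α β : ℝ) (hα₀ : 0 ≤ α) (hα₁ : α < 1) (hβ : 0 < β)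
    (r : ℝ → ι → ℝ) (hr : ∀ i, Continuous fun t => r t i)
    (x : ℝ → ι → ℝ) (hxdiff : ∀ i, Differentiable ℝ fun t => x t i)
    (hxpos : ∀ t ≥ (0 : ℝ), ∀ i, 0 < x t i)
    (hxsum : ∀ t ≥ (0 : ℝ), ∑ i, x t i = 1)
    (hode : ∀ t ≥ (0 : ℝ), ∀ i, deriv (fun s => x s i) t =
      x t i * (β * (r t i - ∑ j, x t j * r t j)
        - α * (Real.log (x t i) - ∑ j, x t j * Real.log (x t j))))
    (p : ι → ℝ) (hp₀ : ∀ i, 0 ≤ p i) (hp₁ : ∑ i, p i = 1)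
    (t : ℝ) (ht : 0 ≤ t) :
    DifferentiableAt ℝ (fun s => ∑ i, p i * Real.log (x s i)) t ∧
    deriv (fun s => ∑ i, p i * Real.log (x s i)) t ≥
      (β * ∑ i, p i * r t i - α * ∑ i, p i * Real.log (p i))
        - (β * ∑ i, x t i * r t i - α * ∑ i, x t i * Real.log (x t i)) :=
  sql_kl_derivative_bound_general α β hα₀ r x hxdiff hxpos hxsum hode p hp₀ hp₁ t ht
end

section
/- Let (A, B) be a two-player weighted potential game with potential φ and weights w₁, w₂ > 0, and let (x, y) be a trajectory of the two-player SQL dynamics for parameters α₁, α₂ ∈ [0,1), β₁, β₂ > 0. Assume in addition that the closure of the set {(x(t), y(t)) : t ≥ 0} consists only of pairs (x*, y*) with x*_i > 0 for all i and y*_j > 0 for all j. Then the ω-limit set Ω of the curve t ↦ (x(t), y(t)) (with respect to the filter atTop on ℝ) is nonempty, compact, and connected, and every (x*, y*) ∈ Ω is a fixed point of the SQL vector field, i.e., a quantal response equilibrium: for every i, β₁((A y*)_i − ∑_{i',j} x*_{i'} A_{i'j} y*_j) = α₁(ln x*_i − ∑_{i'} x*_{i'} ln x*_{i'}), and for every j,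 β₂((x*ᵀ B)_j − ∑_{i,j'} x*_i B_{ij'} y*_{j'}) = α₂(ln y*_j − ∑_{j'} y*_{j'} ln y*_{j'}). -/
/-!
In a weighted potential game each player's SQL field is, up to the factor `βₖ wₖ`, the
replicator field of the marginal payoff of the entropy-regularised potential
`V(x, y) = xᵀ φ y + α₁/(β₁w₁) H(x) + α₂/(β₂w₂) H(y)` (`H` the Shannon entropy).
So `V` increases along trajectories at the rate `β₁w₁ Var_x(u) + β₂w₂ Var_y(v)`, the weighted
variances of those marginal payoffs. The trajectory stays in a compact subset of the open
product of simplices, where `V` is bounded and the field is bounded, so a LaSalle argument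
makes the variances vanish on the ω-limit set: there the marginal payoffs are constant, which
is the QRE condition. The ω-limit set of a precompact continuous curve is a nested
intersection of compact connected sets, hence nonempty, compact and connected.
-/

open Filter Real

/-- The ω-limit set of a curve `z : ℝ → X` with respect to the filter `atTop`. -/
def curveOmegaLimit {X : Type*} [TopologicalSpace X] (z : ℝ → X) : Set X :=
  omegaLimit Filter.atTop (fun t (_ : Unit) => z t) Set.univ

open Set Topology

theorem isConnected_iInter_of_directed {X ι : Type*} [TopologicalSpace X] [T2Space X] [Nonempty ι]
    {C : ι → Set X} (hdir : Directed (· ⊇ ·) C) (hcomp : ∀ i, IsCompact (C i))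
    (hconn : ∀ i, IsConnected (C i)) : IsConnected (⋂ i, C i) := by
  have hclosed : ∀ i, IsClosed (C i) := fun i => (hcomp i).isClosed
  have hΩ : IsCompact (⋂ i, C i) :=
    (hcomp (Classical.arbitrary ι)).of_isClosed_subset (isClosed_iInter hclosed) (iInter_subset _ _)
  refine ⟨IsCompact.nonempty_iInter_of_directed_nonempty_isCompact_isClosed C hdir
    (fun i => (hconn i).nonempty) hcomp hclosed, ?_⟩
  refine isPreconnected_closed_iff.2 fun u v hu hv hcover ⟨a, haΩ, hau⟩ ⟨b, hbΩ, hbv⟩ => ?_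
  by_contra hempty
  have hdisj : Disjoint ((⋂ i, C i) ∩ u) ((⋂ i, C i) ∩ v) := by
    rw [Set.disjoint_iff_inter_eq_empty, ← Set.not_nonempty_iff_eq_empty]
    rintro ⟨q, ⟨hq, hqu⟩, -, hqv⟩
    exact hempty ⟨q, hq, hqu, hqv⟩
  obtain ⟨U, V, hU, hV, huU, hvV, hUV⟩ := SeparatedNhds.of_isCompact_isCompact
    (hΩ.inter_right hu) (hΩ.inter_right hv) hdisj
  -- Cantor's intersection theorem forces some `C i` into `U ∪ V`.
  obtain ⟨i, hi⟩ : ∃ i, C i ⊆ U ∪ V := by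
    by_contra! hout
    obtain ⟨q, hq⟩ := IsCompact.nonempty_iInter_of_directed_nonempty_isCompact_isClosed
      (fun i => C i \ (U ∪ V)) (fun i j => (hdir i j).imp fun k hk =>
        ⟨sdiff_subset_sdiff_left hk.1, sdiff_subset_sdiff_left hk.2⟩)
      (fun i => sdiff_nonempty.2 (hout i))
      (fun i => (hcomp i).diff (hU.union hV)) (fun i => (hclosed i).sdiff (hU.union hV))
    simp only [mem_iInter, Set.mem_sdiff] at hq
    have hqΩ : q ∈ ⋂ i, C i := mem_iInter.2 fun i => (hq i).1
    rcases hcover hqΩ with hqu | hqv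
    · exact (hq (Classical.arbitrary ι)).2 (Or.inl (huU ⟨hqΩ, hqu⟩))
    · exact (hq (Classical.arbitrary ι)).2 (Or.inr (hvV ⟨hqΩ, hqv⟩))
  obtain ⟨q, -, hqU, hqV⟩ := (hconn i).isPreconnected U V hU hV hi
    ⟨a, mem_iInter.1 haΩ i, huU ⟨haΩ, hau⟩⟩ ⟨b, mem_iInter.1 hbΩ i, hvV ⟨hbΩ, hbv⟩⟩
  exact Set.disjoint_left.1 hUV hqU hqV

section CurveOmegaLimit

variable {X : Type*} [TopologicalSpace X]

theorem curveOmegaLimit_subset_closure_image_Ici (z : ℝ → X) (T : ℝ) :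
    curveOmegaLimit z ⊆ closure (z '' Ici T) := by
  have himage : image2 (fun t (_ : Unit) => z t) (Ici T) univ = z '' Ici T := by ext; simp
  rw [← himage]
  exact omegaLimit_subset_closure_image2 _ _ _ (Ici_mem_atTop T)

theorem curveOmegaLimit_eq_iInter_closure_image (z : ℝ → X) :
    curveOmegaLimit z = ⋂ n : ℕ, closure (z '' Ici (n : ℝ)) := by
  refine (subset_iInter fun n : ℕ => curveOmegaLimit_subset_closure_image_Ici z n).antisymm
    fun q hq => mem_iInter₂.2 fun u hu => ?_
  obtain ⟨T, hT⟩ := mem_atTop_sets.1 hu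
  obtain ⟨n, hn⟩ := exists_nat_ge T
  have hsub : z '' Ici (n : ℝ) ⊆ image2 (fun t (_ : Unit) => z t) u univ := by
    rintro _ ⟨t, ht, rfl⟩
    exact ⟨t, hT t (hn.trans ht), (), trivial, rfl⟩
  exact closure_mono hsub (mem_iInter.1 hq n)

variable {z : ℝ → X} (hz : IsCompact (closure (z '' Ici 0)))
include hz

theorem isCompact_curveOmegaLimit : IsCompact (curveOmegaLimit z) :=
  hz.of_isClosed_subset (isClosed_omegaLimit _ _ _) (curveOmegaLimit_subset_closure_image_Ici z 0)

theorem isConnected_curveOmegaLimit [T2Space X] (hzc : Continuous z) :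
    IsConnected (curveOmegaLimit z) := by
  rw [curveOmegaLimit_eq_iInter_closure_image]
  refine isConnected_iInter_of_directed (Antitone.directed_ge fun m n hmn => ?_) (fun n => ?_)
    fun n => (isConnected_Ici.image z hzc.continuousOn).closure
  · exact closure_mono (image_mono (Ici_subset_Ici.2 (by exact_mod_cast hmn)))
  · exact hz.of_isClosed_subset isClosed_closure
      (closure_mono (image_mono (Ici_subset_Ici.2 n.cast_nonneg)))

end CurveOmegaLimit

open scoped NNReal

theorem exists_tendsto_of_hasDerivAt_nonneg {W g : ℝ → ℝ} (hW : ∀ t ≥ 0, HasDerivAt W (g t) t)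
    (hg : ∀ t ≥ 0, 0 ≤ g t) (hbdd : BddAbove (W '' Ici 0)) : ∃ L, Tendsto W atTop (𝓝 L) := by
  have hmono : MonotoneOn W (Ici 0) := by
    refine monotoneOn_of_deriv_nonneg (convex_Ici 0)
      (fun t ht => (hW t ht).continuousAt.continuousWithinAt) (fun t ht => ?_) fun t ht => ?_
    · rw [interior_Ici] at ht
      exact (hW t (le_of_lt ht)).differentiableAt.differentiableWithinAt
    · rw [interior_Ici] at ht
      rw [(hW t (le_of_lt ht)).deriv]
      exact hg t (le_of_lt ht)
  have hmono' : Monotone fun t => W (max 0 t) := fun s t hst =>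
    hmono (le_max_left 0 s) (le_max_left 0 t) (max_le_max le_rfl hst)
  have hbdd' : BddAbove (range fun t => W (max 0 t)) :=
    hbdd.mono (range_subset_iff.2 fun t => mem_image_of_mem W (le_max_left 0 t))
  refine ⟨_, (tendsto_atTop_ciSup hmono' hbdd').congr' ?_⟩
  filter_upwards [eventually_ge_atTop 0] with t ht
  rw [max_eq_right ht]

theorem nonpos_of_mem_curveOmegaLimit_of_hasDerivAt {X : Type*} [PseudoMetricSpace X]
    {z : ℝ → X} {K : Set X} {G : X → ℝ} {W : ℝ → ℝ} {M : ℝ≥0} {L : ℝ}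
    (hz : LipschitzOnWith M z (Ici 0)) (hzK : ∀ t ≥ 0, z t ∈ K)
    (hW : ∀ t ≥ 0, HasDerivAt W (G (z t)) t) (hWL : Tendsto W atTop (𝓝 L))
    {q : X} (hq : q ∈ curveOmegaLimit z) (hGq : ContinuousWithinAt G K q) : G q ≤ 0 := by
  -- If `G q > 0`, every visit of `z` to `ball q (r / 2)` is followed, by the Lipschitz bound, by
  -- a stay of length `δ` in `ball q r`, where `W` grows at rate `≥ G q / 2`. Such visits happen
  -- arbitrarily late, while the increments of the convergent `W` over length `δ` tend to `0`.
  by_contra! hpos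
  obtain ⟨r, hr, hball⟩ := Metric.continuousWithinAt_iff.1 hGq (G q / 2) (half_pos hpos)
  set δ := r / (2 * (M + 1)) with hδ
  have hδpos : 0 < δ := by positivity
  have hMδ : M * δ < r / 2 := by
    rw [hδ, mul_div_assoc', div_lt_div_iff₀ (by positivity) two_pos]
    nlinarith [M.coe_nonneg]
  have hinc : ∀ᶠ t in atTop, W (t + δ) - W t < G q / 2 * δ := by
    have h := (hWL.comp (tendsto_atTop_add_const_right _ δ tendsto_id)).sub hWL
    rw [sub_self] at h
    exact h.eventually (gt_mem_nhds (by positivity))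
  have hvisit : ∃ᶠ t in atTop, dist (z t) q < r / 2 := by
    have h := (mem_omegaLimit_iff_frequently atTop (fun t (_ : Unit) => z t) univ q).1 hq
      (Metric.ball q (r / 2)) (Metric.ball_mem_nhds q (half_pos hr))
    exact h.mono fun t ⟨_, _, ht⟩ => ht
  obtain ⟨t₀, ⟨hvisit₀, hinc₀⟩, ht₀⟩ :=
    ((hvisit.and_eventually hinc).and_eventually (eventually_ge_atTop 0)).exists
  have hnear : ∀ s ∈ Icc t₀ (t₀ + δ), G q / 2 ≤ G (z s) := by
    intro s hs
    have hs₀ : 0 ≤ s := ht₀.trans hs.1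
    have hdist : dist (z s) q < r := calc
      dist (z s) q ≤ dist (z s) (z t₀) + dist (z t₀) q := dist_triangle _ _ _
      _ ≤ M * dist s t₀ + dist (z t₀) q := by
        gcongr; exact hz.dist_le_mul s hs₀ t₀ ht₀
      _ < M * δ + r / 2 := by
        refine add_lt_add_of_le_of_lt (mul_le_mul_of_nonneg_left ?_ M.coe_nonneg) hvisit₀
        rw [Real.dist_eq, abs_of_nonneg (by linarith [hs.1])]
        linarith [hs.2]
      _ < r := by linarith
    have := hball (hzK s hs₀) hdist
    rw [Real.dist_eq, abs_lt] at this
    linarith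
  have hgain : G q / 2 * (t₀ + δ - t₀) ≤ W (t₀ + δ) - W t₀ :=
    (convex_Icc t₀ (t₀ + δ)).mul_sub_le_image_sub_of_le_deriv
      (fun s hs => (hW s (ht₀.trans hs.1)).continuousAt.continuousWithinAt)
      (fun s hs => by
        rw [interior_Icc] at hs
        exact (hW s (ht₀.trans hs.1.le)).differentiableAt.differentiableWithinAt)
      (fun s hs => by
        rw [interior_Icc] at hs
        rw [(hW s (ht₀.trans hs.1.le)).deriv]
        exact hnear s (Ioo_subset_Icc_self hs))
      t₀ (left_mem_Icc.2 (by linarith)) (t₀ + δ) (right_mem_Icc.2 (by linarith)) (by linarith)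
  rw [add_sub_cancel_left] at hgain
  linarith

theorem eq_zero_of_mem_curveOmegaLimit_of_hasDerivAt {E : Type*} [NormedAddCommGroup E]
    [NormedSpace ℝ E] {z : ℝ → E} {F : E → E} {V G : E → ℝ} {K : Set E} (hK : IsCompact K)
    (hzK : ∀ t ≥ 0, z t ∈ K) (hz : ∀ t ≥ 0, HasDerivAt z (F (z t)) t) (hF : ContinuousOn F K)
    (hVz : ∀ t ≥ 0, HasDerivAt (fun s => V (z s)) (G (z t)) t) (hV : ContinuousOn V K)
    (hG : ContinuousOn G K) (hG₀ : ∀ q ∈ K, 0 ≤ G q) {q : E} (hq : q ∈ curveOmegaLimit z) :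
    G q = 0 := by
  have hqK : q ∈ K := closure_minimal (image_subset_iff.2 hzK) hK.isClosed
    (curveOmegaLimit_subset_closure_image_Ici z 0 hq)
  obtain ⟨M, hM⟩ := hK.exists_bound_of_continuousOn hF
  have hlip : LipschitzOnWith M.toNNReal z (Ici 0) :=
    (convex_Ici 0).lipschitzOnWith_of_nnnorm_hasDerivWithin_le
      (fun t ht => (hz t ht).hasDerivWithinAt) fun t ht => by
        rw [← NNReal.coe_le_coe, coe_nnnorm]
        exact (hM _ (hzK t ht)).trans (Real.le_coe_toNNReal M)
  have hbdd : BddAbove ((fun s => V (z s)) '' Ici 0) := by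
    refine (hK.bddAbove_image hV).mono ?_
    rintro _ ⟨t, ht, rfl⟩
    exact mem_image_of_mem V (hzK t ht)
  obtain ⟨L, hL⟩ := exists_tendsto_of_hasDerivAt_nonneg hVz (fun t ht => hG₀ _ (hzK t ht)) hbdd
  exact (nonpos_of_mem_curveOmegaLimit_of_hasDerivAt hlip hzK hVz hL hq (hG q hqK)).antisymm
    (hG₀ q hqK)

noncomputable section Game

variable {ι κ : Type*} [Fintype ι] [Fintype κ]

def weightedVariance (p u : ι → ℝ) : ℝ :=
  ∑ i, p i * (u i - ∑ k, p k * u k) ^ 2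

theorem weightedVariance_nonneg {p : ι → ℝ} (hp : ∀ i, 0 ≤ p i) (u : ι → ℝ) :
    0 ≤ weightedVariance p u :=
  Finset.sum_nonneg fun i _ => mul_nonneg (hp i) (sq_nonneg _)

theorem eq_sum_of_weightedVariance_eq_zero {p u : ι → ℝ} (hp : ∀ i, 0 < p i)
    (h : weightedVariance p u = 0) (i : ι) : u i = ∑ k, p k * u k := by
  have hi := (Finset.sum_eq_zero_iff_of_nonneg fun k _ => mul_nonneg (hp k).le (sq_nonneg _)).1 h
    i (Finset.mem_univ i)
  rwa [mul_eq_zero, or_iff_right (hp i).ne', sq_eq_zero_iff, sub_eq_zero] at hi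

theorem sum_mul_sub_mul_eq_weightedVariance {p : ι → ℝ} (hp : ∑ i, p i = 1) (u : ι → ℝ) :
    ∑ i, p i * (u i - ∑ k, p k * u k) * u i = weightedVariance p u := by
  set m := ∑ k, p k * u k
  calc ∑ i, p i * (u i - m) * u i = ∑ i, (p i * (u i - m) ^ 2 + m * (p i * u i) - m * m * p i) :=
        Finset.sum_congr rfl fun i _ => by ring
    _ = weightedVariance p u + m * m - m * m := by
        rw [Finset.sum_sub_distrib, Finset.sum_add_distrib, ← Finset.mul_sum, ← Finset.mul_sum, hp,
          mul_one]
        rfl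
    _ = weightedVariance p u := by ring

def sqlRate (β α : ℝ) (A : ι → κ → ℝ) (p : ι → ℝ) (r : κ → ℝ) (i : ι) : ℝ :=
  β * ((∑ j, A i j * r j) - ∑ i', ∑ j, p i' * A i' j * r j)
    - α * (log (p i) - ∑ i', p i' * log (p i'))

theorem sqlRate_transpose (β α : ℝ) (B : ι → κ → ℝ) (q : κ → ℝ) (r : ι → ℝ) (j : κ) :
    sqlRate β α (fun j i => B i j) q r j =
      β * ((∑ i, r i * B i j) - ∑ i, ∑ j', r i * B i j' * q j')
        - α * (log (q j) - ∑ j', q j' * log (q j')) := by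
  rw [sqlRate, Finset.sum_comm (f := fun j' i => q j' * B i j' * r i)]
  simp only [mul_comm, mul_left_comm]

theorem sum_sum_mul_mul_eq (p : ι → ℝ) (M : ι → κ → ℝ) (r : κ → ℝ) :
    ∑ k, ∑ j, p k * M k j * r j = ∑ k, p k * ∑ j, M k j * r j := by
  simp only [Finset.mul_sum, mul_assoc]

-- The partial derivative of `regPotential a b φ` in `p i` (for the first player).
def marginalPayoff (a : ℝ) (φ : ι → κ → ℝ) (p : ι → ℝ) (r : κ → ℝ) (i : ι) : ℝ :=
  ∑ j, φ i j * r j - a * (log (p i) + 1)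

def regPotential (a b : ℝ) (φ : ι → κ → ℝ) (q : (ι → ℝ) × (κ → ℝ)) : ℝ :=
  ∑ i, ∑ j, q.1 i * φ i j * q.2 j + a * ∑ i, negMulLog (q.1 i) + b * ∑ j, negMulLog (q.2 j)

theorem continuous_regPotential (a b : ℝ) (φ : ι → κ → ℝ) : Continuous (regPotential a b φ) := by
  unfold regPotential
  fun_prop

theorem hasDerivAt_regPotential (a b : ℝ) (φ : ι → κ → ℝ) {x : ℝ → ι → ℝ} {y : ℝ → κ → ℝ}
    {x' : ι → ℝ} {y' : κ → ℝ} {t : ℝ} (hx : HasDerivAt x x' t) (hy : HasDerivAt y y' t)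
    (hx₀ : ∀ i, x t i ≠ 0) (hy₀ : ∀ j, y t j ≠ 0) :
    HasDerivAt (fun s => regPotential a b φ (x s, y s))
      (∑ i, x' i * marginalPayoff a φ (x t) (y t) i
        + ∑ j, y' j * marginalPayoff b (fun j i => φ i j) (y t) (x t) j) t := by
  have hxi := hasDerivAt_pi.1 hx
  have hyj := hasDerivAt_pi.1 hy
  have h := ((HasDerivAt.fun_sum (u := Finset.univ) fun i _ =>
      HasDerivAt.fun_sum (u := Finset.univ) fun j _ => ((hxi i).mul_const (φ i j)).mul (hyj j)).add
    ((HasDerivAt.fun_sum (u := Finset.univ) fun i _ =>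
      (hasDerivAt_negMulLog (hx₀ i)).comp t (hxi i)).const_mul a)).add
    ((HasDerivAt.fun_sum (u := Finset.univ) fun j _ =>
      (hasDerivAt_negMulLog (hy₀ j)).comp t (hyj j)).const_mul b)
  refine HasDerivAt.congr_deriv (f := fun s => regPotential a b φ (x s, y s)) h ?_
  simp only [marginalPayoff, Finset.sum_add_distrib, mul_sub, Finset.sum_sub_distrib,
    Finset.mul_sum]
  rw [Finset.sum_comm (f := fun i j => x t i * φ i j * y' j)]
  simp only [Finset.sum_sub_distrib, Finset.sum_add_distrib, mul_sub, mul_add, mul_one, mul_neg,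
    Finset.sum_neg_distrib, mul_comm, mul_left_comm]
  ring

-- Player 2 enters as player 1 of the transposed game `fun j i => B i j`.
def sqlField (β₁ α₁ β₂ α₂ : ℝ) (A B : ι → κ → ℝ) (q : (ι → ℝ) × (κ → ℝ)) :
    (ι → ℝ) × (κ → ℝ) :=
  (fun i => q.1 i * sqlRate β₁ α₁ A q.1 q.2 i,
    fun j => q.2 j * sqlRate β₂ α₂ (fun j i => B i j) q.2 q.1 j)

theorem continuousAt_sqlField (β₁ α₁ β₂ α₂ : ℝ) (A B : ι → κ → ℝ) {q : (ι → ℝ) × (κ → ℝ)}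
    (hq₁ : ∀ i, q.1 i ≠ 0) (hq₂ : ∀ j, q.2 j ≠ 0) :
    ContinuousAt (sqlField β₁ α₁ β₂ α₂ A B) q := by
  unfold sqlField sqlRate
  fun_prop (disch := first | exact hq₁ _ | exact hq₂ _)

def potentialDissipation (c₁ α₁ c₂ α₂ : ℝ) (φ : ι → κ → ℝ) (q : (ι → ℝ) × (κ → ℝ)) : ℝ :=
  c₁ * weightedVariance q.1 (marginalPayoff (α₁ / c₁) φ q.1 q.2)
    + c₂ * weightedVariance q.2 (marginalPayoff (α₂ / c₂) (fun j i => φ i j) q.2 q.1)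

theorem continuousAt_potentialDissipation (c₁ α₁ c₂ α₂ : ℝ) (φ : ι → κ → ℝ)
    {q : (ι → ℝ) × (κ → ℝ)} (hq₁ : ∀ i, q.1 i ≠ 0) (hq₂ : ∀ j, q.2 j ≠ 0) :
    ContinuousAt (potentialDissipation c₁ α₁ c₂ α₂ φ) q := by
  unfold potentialDissipation weightedVariance marginalPayoff
  fun_prop (disch := first | exact hq₁ _ | exact hq₂ _)

theorem potentialDissipation_nonneg {c₁ c₂ : ℝ} (hc₁ : 0 ≤ c₁) (hc₂ : 0 ≤ c₂) (α₁ α₂ : ℝ)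
    (φ : ι → κ → ℝ) {q : (ι → ℝ) × (κ → ℝ)} (hq₁ : ∀ i, 0 ≤ q.1 i) (hq₂ : ∀ j, 0 ≤ q.2 j) :
    0 ≤ potentialDissipation c₁ α₁ c₂ α₂ φ q :=
  add_nonneg (mul_nonneg hc₁ (weightedVariance_nonneg hq₁ _))
    (mul_nonneg hc₂ (weightedVariance_nonneg hq₂ _))

variable {A φ : ι → κ → ℝ} {w : ℝ}

theorem payoff_sub_mean_eq_of_potential (hpot : ∀ i i' j, A i j - A i' j = w * (φ i j - φ i' j))
    {p : ι → ℝ} (hp : ∑ i, p i = 1) (r : κ → ℝ) (i : ι) :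
    (∑ j, A i j * r j) - ∑ k, p k * ∑ j, A k j * r j
      = w * ((∑ j, φ i j * r j) - ∑ k, p k * ∑ j, φ k j * r j) := by
  have hmean : ∀ f : ι → ℝ, f i - ∑ k, p k * f k = ∑ k, p k * (f i - f k) := fun f => by
    simp only [mul_sub, Finset.sum_sub_distrib, ← Finset.sum_mul, hp, one_mul]
  rw [hmean (fun k => ∑ j, A k j * r j), hmean (fun k => ∑ j, φ k j * r j), Finset.mul_sum]
  refine Finset.sum_congr rfl fun k _ => ?_
  rw [← Finset.sum_sub_distrib, ← Finset.sum_sub_distrib, Finset.mul_sum, Finset.mul_sum,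
    Finset.mul_sum]
  refine Finset.sum_congr rfl fun j _ => ?_
  rw [← sub_mul, hpot]
  ring

theorem sqlRate_eq_of_potential (hpot : ∀ i i' j, A i j - A i' j = w * (φ i j - φ i' j))
    {β : ℝ} (hβw : β * w ≠ 0) (α : ℝ) {p : ι → ℝ} (hp : ∑ i, p i = 1) (r : κ → ℝ) (i : ι) :
    sqlRate β α A p r i = β * w * (marginalPayoff (α / (β * w)) φ p r i
      - ∑ k, p k * marginalPayoff (α / (β * w)) φ p r k) := by
  have hmean : ∑ k, p k * marginalPayoff (α / (β * w)) φ p r k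
      = ∑ k, p k * ∑ j, φ k j * r j - α / (β * w) * (∑ k, p k * log (p k) + ∑ k, p k) := by
    simp only [marginalPayoff, mul_sub, Finset.sum_sub_distrib, mul_add, Finset.mul_sum]
    rw [← Finset.sum_add_distrib]
    exact congrArg _ (Finset.sum_congr rfl fun k _ => by ring)
  have hα : β * w * (α / (β * w)) = α := mul_div_cancel₀ α hβw
  rw [sqlRate, sum_sum_mul_mul_eq, payoff_sub_mean_eq_of_potential hpot hp, hmean, hp,
    marginalPayoff]
  linear_combination (log (p i) - ∑ k, p k * log (p k)) * hα

theorem sum_mul_sqlRate_mul_marginalPayoff (hpot : ∀ i i' j, A i j - A i' j = w * (φ i j - φ i' j))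
    {β : ℝ} (hβw : β * w ≠ 0) (α : ℝ) {p : ι → ℝ} (hp : ∑ i, p i = 1) (r : κ → ℝ) :
    ∑ i, p i * sqlRate β α A p r i * marginalPayoff (α / (β * w)) φ p r i
      = β * w * weightedVariance p (marginalPayoff (α / (β * w)) φ p r) := by
  simp only [sqlRate_eq_of_potential hpot hβw α hp r]
  rw [← sum_mul_sub_mul_eq_weightedVariance hp, Finset.mul_sum]
  exact Finset.sum_congr rfl fun i _ => by ring

theorem sqlRate_eq_zero_of_weightedVariance_eq_zero
    (hpot : ∀ i i' j, A i j - A i' j = w * (φ i j - φ i' j)) {β : ℝ} (hβw : β * w ≠ 0) (α : ℝ)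
    {p : ι → ℝ} (hp₀ : ∀ i, 0 < p i) (hp : ∑ i, p i = 1) (r : κ → ℝ)
    (h : weightedVariance p (marginalPayoff (α / (β * w)) φ p r) = 0) (i : ι) :
    sqlRate β α A p r i = 0 := by
  rw [sqlRate_eq_of_potential hpot hβw α hp, ← eq_sum_of_weightedVariance_eq_zero hp₀ h i, sub_self,
    mul_zero]

variable {B : ι → κ → ℝ} {w₁ w₂ β₁ β₂ α₁ α₂ : ℝ}
  (hpotA : ∀ i i' j, A i j - A i' j = w₁ * (φ i j - φ i' j))
  (hpotB : ∀ i j j', B i j - B i j' = w₂ * (φ i j - φ i j'))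
  (hc₁ : 0 < β₁ * w₁) (hc₂ : 0 < β₂ * w₂)
include hpotA hpotB hc₁ hc₂

theorem hasDerivAt_regPotential_of_sql {x : ℝ → ι → ℝ} {y : ℝ → κ → ℝ} {t : ℝ}
    (hx : HasDerivAt x (fun i => x t i * sqlRate β₁ α₁ A (x t) (y t) i) t)
    (hy : HasDerivAt y (fun j => y t j * sqlRate β₂ α₂ (fun j i => B i j) (y t) (x t) j) t)
    (hx₀ : ∀ i, x t i ≠ 0) (hy₀ : ∀ j, y t j ≠ 0) (hx₁ : ∑ i, x t i = 1) (hy₁ : ∑ j, y t j = 1) :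
    HasDerivAt (fun s => regPotential (α₁ / (β₁ * w₁)) (α₂ / (β₂ * w₂)) φ (x s, y s))
      (potentialDissipation (β₁ * w₁) α₁ (β₂ * w₂) α₂ φ (x t, y t)) t := by
  refine (hasDerivAt_regPotential _ _ φ hx hy hx₀ hy₀).congr_deriv ?_
  rw [potentialDissipation, ← sum_mul_sqlRate_mul_marginalPayoff hpotA hc₁.ne' α₁ hx₁,
    ← sum_mul_sqlRate_mul_marginalPayoff (A := fun j i => B i j) (φ := fun j i => φ i j)
      (fun j j' i => hpotB i j j') hc₂.ne' α₂ hy₁]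

theorem sqlRate_eq_zero_of_potentialDissipation_eq_zero {q : (ι → ℝ) × (κ → ℝ)}
    (hq₀ : (∀ i, 0 < q.1 i) ∧ ∀ j, 0 < q.2 j) (hq₁ : q ∈ stdSimplex ℝ ι ×ˢ stdSimplex ℝ κ)
    (h : potentialDissipation (β₁ * w₁) α₁ (β₂ * w₂) α₂ φ q = 0) :
    (∀ i, sqlRate β₁ α₁ A q.1 q.2 i = 0) ∧ ∀ j, sqlRate β₂ α₂ (fun j i => B i j) q.2 q.1 j = 0 := by
  rw [potentialDissipation, add_eq_zero_iff_of_nonneg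
    (mul_nonneg hc₁.le (weightedVariance_nonneg (fun i => (hq₀.1 i).le) _))
    (mul_nonneg hc₂.le (weightedVariance_nonneg (fun j => (hq₀.2 j).le) _))] at h
  exact ⟨sqlRate_eq_zero_of_weightedVariance_eq_zero hpotA hc₁.ne' α₁ hq₀.1 hq₁.1.2 q.2
      ((mul_eq_zero.1 h.1).resolve_left hc₁.ne'),
    sqlRate_eq_zero_of_weightedVariance_eq_zero (fun j j' i => hpotB i j j') hc₂.ne' α₂ hq₀.2
      hq₁.2.2 q.1 ((mul_eq_zero.1 h.2).resolve_left hc₂.ne')⟩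

theorem potentialDissipation_eq_zero_of_mem_curveOmegaLimit {x : ℝ → ι → ℝ} {y : ℝ → κ → ℝ}
    {K : Set ((ι → ℝ) × (κ → ℝ))} (hK : IsCompact K)
    (hK₀ : ∀ q ∈ K, (∀ i, 0 < q.1 i) ∧ ∀ j, 0 < q.2 j) (hxyK : ∀ t ≥ 0, (x t, y t) ∈ K)
    (hx₁ : ∀ t ≥ 0, ∑ i, x t i = 1) (hy₁ : ∀ t ≥ 0, ∑ j, y t j = 1)
    (hx : ∀ t ≥ 0, HasDerivAt x (fun i => x t i * sqlRate β₁ α₁ A (x t) (y t) i) t)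
    (hy : ∀ t ≥ 0,
      HasDerivAt y (fun j => y t j * sqlRate β₂ α₂ (fun j i => B i j) (y t) (x t) j) t)
    {q : (ι → ℝ) × (κ → ℝ)} (hq : q ∈ curveOmegaLimit fun t => (x t, y t)) :
    potentialDissipation (β₁ * w₁) α₁ (β₂ * w₂) α₂ φ q = 0 :=
  eq_zero_of_mem_curveOmegaLimit_of_hasDerivAt hK hxyK (F := sqlField β₁ α₁ β₂ α₂ A B)
    (fun t ht => (hx t ht).prodMk (hy t ht))
    (fun p hp => (continuousAt_sqlField β₁ α₁ β₂ α₂ A B (fun i => ((hK₀ p hp).1 i).ne')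
      fun j => ((hK₀ p hp).2 j).ne').continuousWithinAt)
    (fun t ht => hasDerivAt_regPotential_of_sql hpotA hpotB hc₁ hc₂ (hx t ht)
      (hy t ht) (fun i => ((hK₀ _ (hxyK t ht)).1 i).ne') (fun j => ((hK₀ _ (hxyK t ht)).2 j).ne')
      (hx₁ t ht) (hy₁ t ht))
    (continuous_regPotential _ _ φ).continuousOn
    (fun p hp => (continuousAt_potentialDissipation _ _ _ _ φ (fun i => ((hK₀ p hp).1 i).ne')
      fun j => ((hK₀ p hp).2 j).ne').continuousWithinAt)
    (fun p hp => potentialDissipation_nonneg hc₁.le hc₂.le α₁ α₂ φ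
      (fun i => ((hK₀ p hp).1 i).le) fun j => ((hK₀ p hp).2 j).le) hq

end Game

theorem sql_potential_convergence_to_QRE_general
    {ι₁ ι₂ : Type*} [Fintype ι₁] [Fintype ι₂]
    (A B φ : ι₁ → ι₂ → ℝ) (w₁ w₂ : ℝ) (hw₁ : 0 < w₁) (hw₂ : 0 < w₂)
    (hpotA : ∀ i i' j, A i j - A i' j = w₁ * (φ i j - φ i' j))
    (hpotB : ∀ i j j', B i j - B i j' = w₂ * (φ i j - φ i j'))
    (α₁ α₂ β₁ β₂ : ℝ)
    (hβ₁ : 0 < β₁) (hβ₂ : 0 < β₂)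
    (x : ℝ → ι₁ → ℝ) (y : ℝ → ι₂ → ℝ)
    (hxdiff : ∀ i, Differentiable ℝ fun t => x t i)
    (hydiff : ∀ j, Differentiable ℝ fun t => y t j)
    (hxsum : ∀ t ≥ (0 : ℝ), ∑ i, x t i = 1)
    (hysum : ∀ t ≥ (0 : ℝ), ∑ j, y t j = 1)
    (hodex : ∀ t ≥ (0 : ℝ), ∀ i, deriv (fun s => x s i) t =
      x t i * (β₁ * ((∑ j, A i j * y t j) - ∑ i', ∑ j, x t i' * A i' j * y t j)
        - α₁ * (Real.log (x t i) - ∑ i', x t i' * Real.log (x t i'))))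
    (hodey : ∀ t ≥ (0 : ℝ), ∀ j, deriv (fun s => y s j) t =
      y t j * (β₂ * ((∑ i, x t i * B i j) - ∑ i, ∑ j', x t i * B i j' * y t j')
        - α₂ * (Real.log (y t j) - ∑ j', y t j' * Real.log (y t j'))))
    (hclosure : ∀ z ∈ closure {q : (ι₁ → ℝ) × (ι₂ → ℝ) | ∃ t ≥ (0 : ℝ), q = (x t, y t)},
      (∀ i, 0 < z.1 i) ∧ (∀ j, 0 < z.2 j)) :
    (curveOmegaLimit (fun t => ((x t, y t) : (ι₁ → ℝ) × (ι₂ → ℝ)))).Nonempty ∧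
    IsCompact (curveOmegaLimit (fun t => ((x t, y t) : (ι₁ → ℝ) × (ι₂ → ℝ)))) ∧
    IsConnected (curveOmegaLimit (fun t => ((x t, y t) : (ι₁ → ℝ) × (ι₂ → ℝ)))) ∧
    (∀ z ∈ curveOmegaLimit (fun t => ((x t, y t) : (ι₁ → ℝ) × (ι₂ → ℝ))),
      (∀ i, β₁ * ((∑ j, A i j * z.2 j) - ∑ i', ∑ j, z.1 i' * A i' j * z.2 j)
        = α₁ * (Real.log (z.1 i) - ∑ i', z.1 i' * Real.log (z.1 i'))) ∧
      (∀ j, β₂ * ((∑ i, z.1 i * B i j) - ∑ i, ∑ j', z.1 i * B i j' * z.2 j')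
        = α₂ * (Real.log (z.2 j) - ∑ j', z.2 j' * Real.log (z.2 j')))) := by
  set z : ℝ → (ι₁ → ℝ) × (ι₂ → ℝ) := fun t => (x t, y t)
  have hpos : ∀ q ∈ closure (z '' Ici 0), (∀ i, 0 < q.1 i) ∧ ∀ j, 0 < q.2 j := by
    have hS : z '' Ici 0 = {q | ∃ t ≥ (0 : ℝ), q = (x t, y t)} := by
      ext q
      simp only [mem_image, mem_Ici, Set.mem_ofPred_eq, eq_comm, z]
    rwa [hS]
  have hzK : ∀ t ≥ 0, z t ∈ closure (z '' Ici 0) := fun t ht => subset_closure ⟨t, ht, rfl⟩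
  have hKΔ : closure (z '' Ici 0) ⊆ stdSimplex ℝ ι₁ ×ˢ stdSimplex ℝ ι₂ :=
    closure_minimal (image_subset_iff.2 fun t ht =>
      ⟨⟨fun i => ((hpos _ (hzK t ht)).1 i).le, hxsum t ht⟩,
        ⟨fun j => ((hpos _ (hzK t ht)).2 j).le, hysum t ht⟩⟩)
      ((isClosed_stdSimplex ℝ ι₁).prod (isClosed_stdSimplex ℝ ι₂))
  have hK : IsCompact (closure (z '' Ici 0)) :=
    ((isCompact_stdSimplex ℝ ι₁).prod (isCompact_stdSimplex ℝ ι₂)).of_isClosed_subset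
      isClosed_closure hKΔ
  have hzc : Continuous z := (continuous_pi fun i => (hxdiff i).continuous).prodMk
    (continuous_pi fun j => (hydiff j).continuous)
  have hΩ := isConnected_curveOmegaLimit hK hzc
  refine ⟨hΩ.nonempty, isCompact_curveOmegaLimit hK, hΩ, fun q hq => ?_⟩
  have hqK := curveOmegaLimit_subset_closure_image_Ici z 0 hq
  have hG := potentialDissipation_eq_zero_of_mem_curveOmegaLimit hpotA hpotB
    (mul_pos hβ₁ hw₁) (mul_pos hβ₂ hw₂) hK hpos hzK hxsum hysum
    (fun t ht => hasDerivAt_pi.2 fun i => hodex t ht i ▸ (hxdiff i t).hasDerivAt)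
    (fun t ht => hasDerivAt_pi.2 fun j => by
      rw [sqlRate_transpose, ← hodey t ht j]
      exact (hydiff j t).hasDerivAt) hq
  obtain ⟨hqre₁, hqre₂⟩ := sqlRate_eq_zero_of_potentialDissipation_eq_zero hpotA hpotB
    (mul_pos hβ₁ hw₁) (mul_pos hβ₂ hw₂) (hpos q hqK) (hKΔ hqK) hG
  refine ⟨fun i => sub_eq_zero.1 (hqre₁ i), fun j => sub_eq_zero.1 ?_⟩
  rw [← sqlRate_transpose]
  exact hqre₂ j

/-- **Convergence of two-player SQL dynamics to QRE in weighted potential games.**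
For a trajectory `(x, y)` of the two-player smooth Q-learning dynamics in a
weighted potential game with potential `φ` and weights `w₁, w₂ > 0`, whose
closure stays in the interior of the product of simplices, the ω-limit set of
the curve `t ↦ (x t, y t)` is nonempty, compact and connected, and each of its
points is a quantal response equilibrium (a fixed point of the SQL vector
field). -/
theorem sql_potential_convergence_to_QRE
    {ι₁ ι₂ : Type*} [Fintype ι₁] [Fintype ι₂] [Nonempty ι₁] [Nonempty ι₂]
    (A B φ : ι₁ → ι₂ → ℝ) (w₁ w₂ : ℝ) (hw₁ : 0 < w₁) (hw₂ : 0 < w₂)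
    (hpotA : ∀ i i' j, A i j - A i' j = w₁ * (φ i j - φ i' j))
    (hpotB : ∀ i j j', B i j - B i j' = w₂ * (φ i j - φ i j'))
    (α₁ α₂ β₁ β₂ : ℝ)
    (hα₁₀ : 0 ≤ α₁) (hα₁₁ : α₁ < 1) (hα₂₀ : 0 ≤ α₂) (hα₂₁ : α₂ < 1)
    (hβ₁ : 0 < β₁) (hβ₂ : 0 < β₂)
    (x : ℝ → ι₁ → ℝ) (y : ℝ → ι₂ → ℝ)
    (hxdiff : ∀ i, Differentiable ℝ fun t => x t i)
    (hydiff : ∀ j, Differentiable ℝ fun t => y t j)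
    (hxpos : ∀ t ≥ (0 : ℝ), ∀ i, 0 < x t i)
    (hypos : ∀ t ≥ (0 : ℝ), ∀ j, 0 < y t j)
    (hxsum : ∀ t ≥ (0 : ℝ), ∑ i, x t i = 1)
    (hysum : ∀ t ≥ (0 : ℝ), ∑ j, y t j = 1)
    (hodex : ∀ t ≥ (0 : ℝ), ∀ i, deriv (fun s => x s i) t =
      x t i * (β₁ * ((∑ j, A i j * y t j) - ∑ i', ∑ j, x t i' * A i' j * y t j)
        - α₁ * (Real.log (x t i) - ∑ i', x t i' * Real.log (x t i'))))
    (hodey : ∀ t ≥ (0 : ℝ), ∀ j, deriv (fun s => y s j) t =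
      y t j * (β₂ * ((∑ i, x t i * B i j) - ∑ i, ∑ j', x t i * B i j' * y t j')
        - α₂ * (Real.log (y t j) - ∑ j', y t j' * Real.log (y t j'))))
    (hclosure : ∀ z ∈ closure {q : (ι₁ → ℝ) × (ι₂ → ℝ) | ∃ t ≥ (0 : ℝ), q = (x t, y t)},
      (∀ i, 0 < z.1 i) ∧ (∀ j, 0 < z.2 j)) :
    (curveOmegaLimit (fun t => ((x t, y t) : (ι₁ → ℝ) × (ι₂ → ℝ)))).Nonempty ∧
    IsCompact (curveOmegaLimit (fun t => ((x t, y t) : (ι₁ → ℝ) × (ι₂ → ℝ)))) ∧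
    IsConnected (curveOmegaLimit (fun t => ((x t, y t) : (ι₁ → ℝ) × (ι₂ → ℝ)))) ∧
    (∀ z ∈ curveOmegaLimit (fun t => ((x t, y t) : (ι₁ → ℝ) × (ι₂ → ℝ))),
      (∀ i, β₁ * ((∑ j, A i j * z.2 j) - ∑ i', ∑ j, z.1 i' * A i' j * z.2 j)
        = α₁ * (Real.log (z.1 i) - ∑ i', z.1 i' * Real.log (z.1 i'))) ∧
      (∀ j, β₂ * ((∑ i, z.1 i * B i j) - ∑ i, ∑ j', z.1 i * B i j' * z.2 j')
        = α₂ * (Real.log (z.2 j) - ∑ j', z.2 j' * Real.log (z.2 j')))) :=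
  sql_potential_convergence_to_QRE_general A B φ w₁ w₂ hw₁ hw₂ hpotA hpotB α₁ α₂ β₁ β₂ hβ₁ hβ₂ x y
    hxdiff hydiff hxsum hysum hodex hodey hclosure
end

section
/- Let (A, B) be a two-player weighted potential game with potential φ and weights w₁, w₂ > 0, and let (x, y) be a trajectory of the two-player SQL dynamics for parameters α₁, α₂ ∈ [0,1), β₁, β₂ > 0. Define the modified potential Φ^H(x,y) := ∑_{i,j} φ_{ij} x_i y_j + δ₁ H(x) + δ₂ H(y), where δ₁ = α₁/(β₁ w₁), δ₂ = α₂/(β₂ w₂), and H(z) = −∑_l z_l ln z_l. Then the function t ↦ Φ^H(x(t), y(t)) is differentiable with nonnegative derivative at every t ≥ 0, and its derivative at t equals 0 if and only if x'(t) = 0 and y'(t) = 0, i.e., if and only if (x(t), y(t)) is a fixed point of the SQL dynamics. -/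
/-!
With `g i = ∑ j, φ i j * y j - δ₁ * log (x i)` (the `x`-gradient of `Φ^H`, up to the constant
`-δ₁` that mass conservation `∑ i, x' i = 0` removes), the weighted-potential identity turns
player 1's SQL field into `β₁ w₁` times the replicator field `x i * (g i - ∑ k, x k * g k)`;
similarly for player 2 with `k j = ∑ i, x i * φ i j - δ₂ * log (y j)`. Hence
`d/dt Φ^H = β₁ w₁ Var_x(g) + β₂ w₂ Var_y(k) ≥ 0`, and since `x, y > 0` both variances vanish
exactly when both replicator fields do.
-/

open Finset Real

section Replicator

variable {ι : Type*} [Fintype ι]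

def replicator (p g : ι → ℝ) (i : ι) : ℝ :=
  p i * (g i - ∑ k, p k * g k)

theorem sum_replicator {p : ι → ℝ} (hp : ∑ i, p i = 1) (g : ι → ℝ) :
    ∑ i, replicator p g i = 0 := by
  simp only [replicator, mul_sub, sum_sub_distrib, ← sum_mul, hp, one_mul, sub_self]

theorem sum_replicator_mul_self {p : ι → ℝ} (hp : ∑ i, p i = 1) (g : ι → ℝ) :
    ∑ i, replicator p g i * g i = ∑ i, p i * (g i - ∑ k, p k * g k) ^ 2 := by
  set m := ∑ k, p k * g k
  calc ∑ i, replicator p g i * g i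
      = ∑ i, p i * (g i - m) ^ 2 + m * ∑ i, replicator p g i := by
        rw [mul_sum, ← sum_add_distrib]
        exact sum_congr rfl fun i _ => by simp only [replicator]; ring
    _ = ∑ i, p i * (g i - m) ^ 2 := by rw [sum_replicator hp, mul_zero, add_zero]

theorem sum_mul_replicator_mul_self_nonneg {p : ι → ℝ} (hp : ∑ i, p i = 1)
    (hp₀ : ∀ i, 0 ≤ p i) (g : ι → ℝ) {c : ℝ} (hc : 0 ≤ c) :
    0 ≤ ∑ i, c * replicator p g i * g i := by
  simp only [mul_assoc, ← mul_sum, sum_replicator_mul_self hp]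
  exact mul_nonneg hc (sum_nonneg fun i _ => mul_nonneg (hp₀ i) (sq_nonneg _))

theorem sum_mul_replicator_mul_self_eq_zero_iff {p : ι → ℝ} (hp : ∑ i, p i = 1)
    (hp₀ : ∀ i, 0 < p i) (g : ι → ℝ) {c : ℝ} (hc : 0 < c) :
    ∑ i, c * replicator p g i * g i = 0 ↔ ∀ i, c * replicator p g i = 0 := by
  have hsq : ∀ i ∈ univ, 0 ≤ p i * (g i - ∑ k, p k * g k) ^ 2 :=
    fun i _ => mul_nonneg (hp₀ i).le (sq_nonneg _)
  simp_rw [mul_assoc, ← mul_sum, mul_eq_zero, hc.ne', false_or]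
  rw [sum_replicator_mul_self hp, sum_eq_zero_iff_of_nonneg hsq]
  simp [replicator, (hp₀ _).ne']

theorem sub_sum_mul_eq_sum_mul_sub {p : ι → ℝ} (hp : ∑ i, p i = 1) (f : ι → ℝ) (i : ι) :
    f i - ∑ k, p k * f k = ∑ k, p k * (f i - f k) := by
  simp only [mul_sub, sum_sub_distrib, ← sum_mul, hp, one_mul]

theorem sub_sum_mul_eq_mul_sub_sum_mul {p u v : ι → ℝ} {w : ℝ} (hp : ∑ i, p i = 1)
    (huv : ∀ i k, u i - u k = w * (v i - v k)) (i : ι) :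
    u i - ∑ k, p k * u k = w * (v i - ∑ k, p k * v k) := by
  simp only [sub_sum_mul_eq_sum_mul_sub hp, huv, mul_sum, mul_left_comm w]

theorem sql_field_eq_mul_replicator {p u v h : ι → ℝ} {w α β : ℝ} (hp : ∑ i, p i = 1)
    (huv : ∀ i k, u i - u k = w * (v i - v k)) (hβw : β * w ≠ 0) (i : ι) :
    p i * (β * (u i - ∑ k, p k * u k) - α * (h i - ∑ k, p k * h k))
      = β * w * replicator p (fun k => v k - α / (β * w) * h k) i := by
  have hmean : ∑ k, p k * (v k - α / (β * w) * h k)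
      = ∑ k, p k * v k - α / (β * w) * ∑ k, p k * h k := by
    simp only [mul_sub, sum_sub_distrib, mul_sum, mul_left_comm]
  rw [sub_sum_mul_eq_mul_sub_sum_mul hp huv, replicator, hmean]
  linear_combination p i * (h i - ∑ k, p k * h k) * mul_div_cancel₀ α hβw

end Replicator

noncomputable def entropy {ι : Type*} [Fintype ι] (p : ι → ℝ) : ℝ :=
  -∑ i, p i * log (p i)

theorem hasDerivAt_entropy {ι : Type*} [Fintype ι] {p : ℝ → ι → ℝ} {p' : ι → ℝ} {t : ℝ}
    (hp : ∀ i, HasDerivAt (fun s => p s i) (p' i) t) (hp₀ : ∀ i, p t i ≠ 0)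
    (hp' : ∑ i, p' i = 0) :
    HasDerivAt (fun s => entropy (p s)) (-∑ i, p' i * log (p t i)) t := by
  have h : ∀ i, HasDerivAt (fun s => p s i * log (p s i)) (p' i * log (p t i) + p' i) t := by
    intro i
    exact ((hp i).fun_mul ((hp i).log (hp₀ i))).congr_deriv (by rw [mul_div_cancel₀ _ (hp₀ i)])
  refine (HasDerivAt.fun_sum fun i _ => h i).fun_neg.congr_deriv ?_
  rw [sum_add_distrib, hp', add_zero]

theorem sum_mul_sub_sum_mul_of_sub_eq_mul_sub {ι₁ ι₂ : Type*} [Fintype ι₂]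
    {A φ : ι₁ → ι₂ → ℝ} {w : ℝ}
    (hA : ∀ i i' j, A i j - A i' j = w * (φ i j - φ i' j)) (q : ι₂ → ℝ) (i i' : ι₁) :
    ∑ j, A i j * q j - ∑ j, A i' j * q j = w * (∑ j, φ i j * q j - ∑ j, φ i' j * q j) := by
  simp only [← sum_sub_distrib, ← sub_mul, hA, mul_sum, mul_assoc]

theorem sum_mul_sub_sum_mul_of_sub_eq_mul_sub' {ι₁ ι₂ : Type*} [Fintype ι₁]
    {B φ : ι₁ → ι₂ → ℝ} {w : ℝ}
    (hB : ∀ i j j', B i j - B i j' = w * (φ i j - φ i j')) (p : ι₁ → ℝ) (j j' : ι₂) :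
    ∑ i, p i * B i j - ∑ i, p i * B i j' = w * (∑ i, p i * φ i j - ∑ i, p i * φ i j') := by
  simp only [← sum_sub_distrib, ← mul_sub, hB, mul_sum, mul_left_comm]

section Potential

variable {ι₁ ι₂ : Type*} [Fintype ι₁] [Fintype ι₂]

theorem sum_sum_mul_mul_eq_sum_mul_sum (p : ι₁ → ℝ) (M : ι₁ → ι₂ → ℝ) (q : ι₂ → ℝ) :
    ∑ i, ∑ j, p i * M i j * q j = ∑ i, p i * ∑ j, M i j * q j := by
  simp only [mul_sum, mul_assoc]

theorem sum_sum_mul_mul_eq_sum_mul_sum' (p : ι₁ → ℝ) (M : ι₁ → ι₂ → ℝ) (q : ι₂ → ℝ) :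
    ∑ i, ∑ j, p i * M i j * q j = ∑ j, q j * ∑ i, p i * M i j := by
  rw [sum_comm]
  simp only [mul_sum, mul_comm]

noncomputable def modifiedPotential (φ : ι₁ → ι₂ → ℝ) (δ₁ δ₂ : ℝ) (p : ι₁ → ℝ) (q : ι₂ → ℝ) :
    ℝ :=
  ∑ i, ∑ j, φ i j * p i * q j + δ₁ * entropy p + δ₂ * entropy q

theorem hasDerivAt_sum_sum_mul_mul (φ : ι₁ → ι₂ → ℝ) {p : ℝ → ι₁ → ℝ} {q : ℝ → ι₂ → ℝ}
    {p' : ι₁ → ℝ} {q' : ι₂ → ℝ} {t : ℝ}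
    (hp : ∀ i, HasDerivAt (fun s => p s i) (p' i) t)
    (hq : ∀ j, HasDerivAt (fun s => q s j) (q' j) t) :
    HasDerivAt (fun s => ∑ i, ∑ j, φ i j * p s i * q s j)
      (∑ i, p' i * ∑ j, φ i j * q t j + ∑ j, q' j * ∑ i, p t i * φ i j) t := by
  refine (HasDerivAt.fun_sum fun i _ => HasDerivAt.fun_sum fun j _ =>
    ((hp i).const_mul (φ i j)).fun_mul (hq j)).congr_deriv ?_
  simp only [sum_add_distrib]
  congr 1
  · simp only [mul_sum]
    exact sum_congr rfl fun i _ => sum_congr rfl fun j _ => by ring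
  · rw [sum_comm]
    simp only [mul_sum]
    exact sum_congr rfl fun j _ => sum_congr rfl fun i _ => by ring

theorem hasDerivAt_modifiedPotential (φ : ι₁ → ι₂ → ℝ) (δ₁ δ₂ : ℝ) {p : ℝ → ι₁ → ℝ}
    {q : ℝ → ι₂ → ℝ} {p' : ι₁ → ℝ} {q' : ι₂ → ℝ} {t : ℝ}
    (hp : ∀ i, HasDerivAt (fun s => p s i) (p' i) t)
    (hq : ∀ j, HasDerivAt (fun s => q s j) (q' j) t)
    (hp₀ : ∀ i, p t i ≠ 0) (hq₀ : ∀ j, q t j ≠ 0) (hp' : ∑ i, p' i = 0) (hq' : ∑ j, q' j = 0) :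
    HasDerivAt (fun s => modifiedPotential φ δ₁ δ₂ (p s) (q s))
      (∑ i, p' i * (∑ j, φ i j * q t j - δ₁ * log (p t i))
        + ∑ j, q' j * (∑ i, p t i * φ i j - δ₂ * log (q t j))) t := by
  refine (((hasDerivAt_sum_sum_mul_mul φ hp hq).fun_add
    ((hasDerivAt_entropy hp hp₀ hp').const_mul δ₁)).fun_add
    ((hasDerivAt_entropy hq hq₀ hq').const_mul δ₂)).congr_deriv ?_
  simp only [mul_sub, sum_sub_distrib, mul_left_comm (p' _) δ₁, mul_left_comm (q' _) δ₂, ← mul_sum]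
  ring

end Potential

theorem sql_modified_potential_lyapunov_general
    {ι₁ ι₂ : Type*} [Fintype ι₁] [Fintype ι₂]
    (A B φ : ι₁ → ι₂ → ℝ) (w₁ w₂ : ℝ) (hw₁ : 0 < w₁) (hw₂ : 0 < w₂)
    (hpotA : ∀ i i' j, A i j - A i' j = w₁ * (φ i j - φ i' j))
    (hpotB : ∀ i j j', B i j - B i j' = w₂ * (φ i j - φ i j'))
    (α₁ α₂ β₁ β₂ : ℝ)
    (hβ₁ : 0 < β₁) (hβ₂ : 0 < β₂)
    (x : ℝ → ι₁ → ℝ) (y : ℝ → ι₂ → ℝ)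
    (hxdiff : ∀ i, Differentiable ℝ fun t => x t i)
    (hydiff : ∀ j, Differentiable ℝ fun t => y t j)
    (hxpos : ∀ t ≥ (0 : ℝ), ∀ i, 0 < x t i)
    (hypos : ∀ t ≥ (0 : ℝ), ∀ j, 0 < y t j)
    (hxsum : ∀ t ≥ (0 : ℝ), ∑ i, x t i = 1)
    (hysum : ∀ t ≥ (0 : ℝ), ∑ j, y t j = 1)
    (hodex : ∀ t ≥ (0 : ℝ), ∀ i, deriv (fun s => x s i) t =
      x t i * (β₁ * ((∑ j, A i j * y t j) - ∑ i', ∑ j, x t i' * A i' j * y t j)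
        - α₁ * (Real.log (x t i) - ∑ i', x t i' * Real.log (x t i'))))
    (hodey : ∀ t ≥ (0 : ℝ), ∀ j, deriv (fun s => y s j) t =
      y t j * (β₂ * ((∑ i, x t i * B i j) - ∑ i, ∑ j', x t i * B i j' * y t j')
        - α₂ * (Real.log (y t j) - ∑ j', y t j' * Real.log (y t j')))) :
    ∀ t ≥ (0 : ℝ),
      DifferentiableAt ℝ (fun s =>
        (∑ i, ∑ j, φ i j * x s i * y s j)
          + (α₁ / (β₁ * w₁)) * (-∑ i, x s i * Real.log (x s i))
          + (α₂ / (β₂ * w₂)) * (-∑ j, y s j * Real.log (y s j))) t ∧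
      0 ≤ deriv (fun s =>
        (∑ i, ∑ j, φ i j * x s i * y s j)
          + (α₁ / (β₁ * w₁)) * (-∑ i, x s i * Real.log (x s i))
          + (α₂ / (β₂ * w₂)) * (-∑ j, y s j * Real.log (y s j))) t ∧
      (deriv (fun s =>
        (∑ i, ∑ j, φ i j * x s i * y s j)
          + (α₁ / (β₁ * w₁)) * (-∑ i, x s i * Real.log (x s i))
          + (α₂ / (β₂ * w₂)) * (-∑ j, y s j * Real.log (y s j))) t = 0 ↔
        ((∀ i, deriv (fun s => x s i) t = 0) ∧ (∀ j, deriv (fun s => y s j) t = 0))) := by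
  intro t ht
  set g : ι₁ → ℝ := fun i => ∑ j, φ i j * y t j - α₁ / (β₁ * w₁) * log (x t i)
  set k : ι₂ → ℝ := fun j => ∑ i, x t i * φ i j - α₂ / (β₂ * w₂) * log (y t j)
  have hc₁ : 0 < β₁ * w₁ := mul_pos hβ₁ hw₁
  have hc₂ : 0 < β₂ * w₂ := mul_pos hβ₂ hw₂
  have hx' (i : ι₁) : deriv (fun s => x s i) t = β₁ * w₁ * replicator (x t) g i := by
    rw [hodex t ht i, sum_sum_mul_mul_eq_sum_mul_sum]
    exact sql_field_eq_mul_replicator (α := α₁) (h := fun i => log (x t i)) (hxsum t ht)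
      (sum_mul_sub_sum_mul_of_sub_eq_mul_sub hpotA (y t)) hc₁.ne' i
  have hy' (j : ι₂) : deriv (fun s => y s j) t = β₂ * w₂ * replicator (y t) k j := by
    rw [hodey t ht j, sum_sum_mul_mul_eq_sum_mul_sum']
    exact sql_field_eq_mul_replicator (α := α₂) (h := fun j => log (y t j)) (hysum t ht)
      (sum_mul_sub_sum_mul_of_sub_eq_mul_sub' hpotB (x t)) hc₂.ne' j
  have hΦ := hasDerivAt_modifiedPotential φ (α₁ / (β₁ * w₁)) (α₂ / (β₂ * w₂))
    (fun i => hx' i ▸ (hxdiff i t).hasDerivAt) (fun j => hy' j ▸ (hydiff j t).hasDerivAt)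
    (fun i => (hxpos t ht i).ne') (fun j => (hypos t ht j).ne')
    (by rw [← mul_sum, sum_replicator (hxsum t ht), mul_zero])
    (by rw [← mul_sum, sum_replicator (hysum t ht), mul_zero])
  simp only [modifiedPotential, entropy] at hΦ
  have hx₀ := sum_mul_replicator_mul_self_nonneg (hxsum t ht) (fun i => (hxpos t ht i).le) g hc₁.le
  have hy₀ := sum_mul_replicator_mul_self_nonneg (hysum t ht) (fun j => (hypos t ht j).le) k hc₂.le
  simp only [hx', hy', hΦ.deriv]
  exact ⟨hΦ.differentiableAt, add_nonneg hx₀ hy₀, (add_eq_zero_iff_of_nonneg hx₀ hy₀).trans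
    (and_congr (sum_mul_replicator_mul_self_eq_zero_iff (hxsum t ht) (hxpos t ht) g hc₁)
      (sum_mul_replicator_mul_self_eq_zero_iff (hysum t ht) (hypos t ht) k hc₂))⟩

/-- **The modified potential is a Lyapunov function for two-player SQL dynamics.**
Along a trajectory `(x, y)` of the two-player smooth Q-learning dynamics in a
weighted potential game with potential `φ` and weights `w₁, w₂ > 0`, the
modified potential
`Φ^H(x,y) = ∑_{i,j} φ_{ij} x_i y_j + δ₁ H(x) + δ₂ H(y)` with
`δ₁ = α₁/(β₁ w₁)`, `δ₂ = α₂/(β₂ w₂)` and `H(z) = −∑ z_l ln z_l` is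
differentiable in time with nonnegative derivative at every `t ≥ 0`, and its
derivative vanishes exactly at fixed points of the dynamics. -/
theorem sql_modified_potential_lyapunov
    {ι₁ ι₂ : Type*} [Fintype ι₁] [Fintype ι₂] [Nonempty ι₁] [Nonempty ι₂]
    (A B φ : ι₁ → ι₂ → ℝ) (w₁ w₂ : ℝ) (hw₁ : 0 < w₁) (hw₂ : 0 < w₂)
    (hpotA : ∀ i i' j, A i j - A i' j = w₁ * (φ i j - φ i' j))
    (hpotB : ∀ i j j', B i j - B i j' = w₂ * (φ i j - φ i j'))
    (α₁ α₂ β₁ β₂ : ℝ)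
    (hα₁₀ : 0 ≤ α₁) (hα₁₁ : α₁ < 1) (hα₂₀ : 0 ≤ α₂) (hα₂₁ : α₂ < 1)
    (hβ₁ : 0 < β₁) (hβ₂ : 0 < β₂)
    (x : ℝ → ι₁ → ℝ) (y : ℝ → ι₂ → ℝ)
    (hxdiff : ∀ i, Differentiable ℝ fun t => x t i)
    (hydiff : ∀ j, Differentiable ℝ fun t => y t j)
    (hxpos : ∀ t ≥ (0 : ℝ), ∀ i, 0 < x t i)
    (hypos : ∀ t ≥ (0 : ℝ), ∀ j, 0 < y t j)
    (hxsum : ∀ t ≥ (0 : ℝ), ∑ i, x t i = 1)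
    (hysum : ∀ t ≥ (0 : ℝ), ∑ j, y t j = 1)
    (hodex : ∀ t ≥ (0 : ℝ), ∀ i, deriv (fun s => x s i) t =
      x t i * (β₁ * ((∑ j, A i j * y t j) - ∑ i', ∑ j, x t i' * A i' j * y t j)
        - α₁ * (Real.log (x t i) - ∑ i', x t i' * Real.log (x t i'))))
    (hodey : ∀ t ≥ (0 : ℝ), ∀ j, deriv (fun s => y s j) t =
      y t j * (β₂ * ((∑ i, x t i * B i j) - ∑ i, ∑ j', x t i * B i j' * y t j')
        - α₂ * (Real.log (y t j) - ∑ j', y t j' * Real.log (y t j')))) :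
    ∀ t ≥ (0 : ℝ),
      DifferentiableAt ℝ (fun s =>
        (∑ i, ∑ j, φ i j * x s i * y s j)
          + (α₁ / (β₁ * w₁)) * (-∑ i, x s i * Real.log (x s i))
          + (α₂ / (β₂ * w₂)) * (-∑ j, y s j * Real.log (y s j))) t ∧
      0 ≤ deriv (fun s =>
        (∑ i, ∑ j, φ i j * x s i * y s j)
          + (α₁ / (β₁ * w₁)) * (-∑ i, x s i * Real.log (x s i))
          + (α₂ / (β₂ * w₂)) * (-∑ j, y s j * Real.log (y s j))) t ∧
      (deriv (fun s =>
        (∑ i, ∑ j, φ i j * x s i * y s j)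
          + (α₁ / (β₁ * w₁)) * (-∑ i, x s i * Real.log (x s i))
          + (α₂ / (β₂ * w₂)) * (-∑ j, y s j * Real.log (y s j))) t = 0 ↔
        ((∀ i, deriv (fun s => x s i) t = 0) ∧ (∀ j, deriv (fun s => y s j) t = 0))) :=
  sql_modified_potential_lyapunov_general A B φ w₁ w₂ hw₁ hw₂ hpotA hpotB α₁ α₂ β₁ β₂ hβ₁ hβ₂ x y
    hxdiff hydiff hxpos hypos hxsum hysum hodex hodey
end

section
/- Let (u, v) be a 2×2 coordination game with mixed-equilibrium coordinates x_mix, y_mix, let α_x, β_x, α_y, β_y > 0, and let (x, y) ∈ (0,1)² be a QRE of the game for these parameters. Assume x_mix + y_mix > 1, x_mix > 1/2, and y_mix > 1/2. Then either (x > x_mix and y > y_mix) or (x < 1/2 and y < 1/2). -/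
open Real

lemma qre_aux_pos (x : ℝ) (hx0 : 0 < x) (hx1 : x < 1) : 0 < 1 / x - 1 := by
  have : 1 < 1 / x := by rw [lt_div_iff₀ hx0]; linarith
  linarith

lemma qre_aux_neg_log (x : ℝ) (hx0 : 0 < x) (hx1 : x < 1)
    (h : Real.log (1 / x - 1) < 0) : 1 / 2 < x := by
  have ht := qre_aux_pos x hx0 hx1
  have h1 : 1 / x - 1 < 1 := (Real.log_neg_iff ht).mp h
  have h2 : 1 / x < 2 := by linarith
  have := (div_lt_iff₀ hx0).mp h2
  linarith

lemma qre_aux_pos_log (x : ℝ) (hx0 : 0 < x) (hx1 : x < 1)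
    (h : 0 < Real.log (1 / x - 1)) : x < 1 / 2 := by
  have ht := qre_aux_pos x hx0 hx1
  have h1 : 1 < 1 / x - 1 := by
    by_contra hc
    push_neg at hc
    have : Real.log (1 / x - 1) ≤ 0 := Real.log_nonpos (le_of_lt ht) hc
    linarith
  have h2 : 2 < 1 / x := by linarith
  have := (lt_div_iff₀ hx0).mp h2
  linarith

lemma qre_aux_zero_log (x : ℝ) (hx0 : 0 < x) (hx1 : x < 1)
    (h : Real.log (1 / x - 1) = 0) : x = 1 / 2 := by
  by_contra hne
  rcases lt_or_gt_of_ne hne with hlt | hgt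
  · have ht := qre_aux_pos x hx0 hx1
    have h2 : 2 < 1 / x := by
      rw [lt_div_iff₀ hx0]; linarith
    have : 1 < 1 / x - 1 := by linarith
    have := Real.log_pos this
    linarith
  · have h2 : 1 / x < 2 := by
      rw [div_lt_iff₀ hx0]; linarith
    have ht := qre_aux_pos x hx0 hx1
    have : Real.log (1 / x - 1) < 0 := Real.log_neg ht (by linarith)
    linarith

/-- **Geometric locus of QRE in 2×2 coordination games, case (i).**
In a 2×2 coordination game with fully mixed equilibrium coordinates
`x_mix = (v22 − v12)/(v11 − v12 − v21 + v22)` and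
`y_mix = (u22 − u12)/(u11 − u12 − u21 + u22)`, if `x_mix + y_mix > 1`,
`x_mix > 1/2` and `y_mix > 1/2`, then every QRE `(x, y) ∈ (0,1)²` satisfies
either `x > x_mix ∧ y > y_mix` or `x < 1/2 ∧ y < 1/2`. -/
theorem qre_location_case_i
    (u11 u12 u21 u22 v11 v12 v21 v22 : ℝ)
    (hu1 : u11 > u21) (hu2 : u22 > u12) (hv1 : v11 > v21) (hv2 : v22 > v12)
    (αx βx αy βy : ℝ) (hαx : 0 < αx) (hβx : 0 < βx) (hαy : 0 < αy) (hβy : 0 < βy)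
    (x y : ℝ) (hx0 : 0 < x) (hx1 : x < 1) (hy0 : 0 < y) (hy1 : y < 1)
    (hQREx : βx * (y * (u11 - u21) + (1 - y) * (u12 - u22)) + αx * Real.log (1 / x - 1) = 0)
    (hQREy : βy * (x * (v11 - v21) + (1 - x) * (v12 - v22)) + αy * Real.log (1 / y - 1) = 0)
    (hsum : (v22 - v12) / (v11 - v12 - v21 + v22) + (u22 - u12) / (u11 - u12 - u21 + u22) > 1)
    (hxmix : (v22 - v12) / (v11 - v12 - v21 + v22) > 1 / 2)
    (hymix : (u22 - u12) / (u11 - u12 - u21 + u22) > 1 / 2) :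
    (x > (v22 - v12) / (v11 - v12 - v21 + v22) ∧ y > (u22 - u12) / (u11 - u12 - u21 + u22)) ∨
    (x < 1 / 2 ∧ y < 1 / 2) := by
  have hk1 : 0 < u11 - u12 - u21 + u22 := by linarith
  have hk2 : 0 < v11 - v12 - v21 + v22 := by linarith
  have hEx : αx * Real.log (1 / x - 1) = βx * ((u22 - u12) - (u11 - u12 - u21 + u22) * y) := by
    have h : y * (u11 - u21) + (1 - y) * (u12 - u22) = (u11 - u12 - u21 + u22) * y - (u22 - u12) := by
      ring
    rw [h] at hQREx
    linarith
  have hEy : αy * Real.log (1 / y - 1) = βy * ((v22 - v12) - (v11 - v12 - v21 + v22) * x) := by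
    have h : x * (v11 - v21) + (1 - x) * (v12 - v22) = (v11 - v12 - v21 + v22) * x - (v22 - v12) := by
      ring
    rw [h] at hQREy
    linarith
  rcases lt_trichotomy ((u22 - u12) / (u11 - u12 - u21 + u22)) y with hcase | hcase | hcase
  · -- y > y_mix : first branch
    have hc : u22 - u12 < (u11 - u12 - u21 + u22) * y := by
      have := (div_lt_iff₀ hk1).mp hcase
      linarith
    have hLx : Real.log (1 / x - 1) < 0 := by
      by_contra h
      push_neg at h
      have h1 : 0 ≤ αx * Real.log (1 / x - 1) := mul_nonneg hαx.le h
      have h2 : βx * ((u22 - u12) - (u11 - u12 - u21 + u22) * y) < 0 :=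
        mul_neg_of_pos_of_neg hβx (by linarith)
      linarith
    have hx12 : 1 / 2 < x := qre_aux_neg_log x hx0 hx1 hLx
    have hy12 : 1 / 2 < y := lt_trans hymix hcase
    have hLy : Real.log (1 / y - 1) < 0 := by
      apply Real.log_neg (qre_aux_pos y hy0 hy1)
      have : 1 / y < 2 := by rw [div_lt_iff₀ hy0]; linarith
      linarith
    have hc2 : v22 - v12 < (v11 - v12 - v21 + v22) * x := by
      by_contra h
      push_neg at h
      have h1 : αy * Real.log (1 / y - 1) < 0 := mul_neg_of_pos_of_neg hαy hLy
      have h2 : 0 ≤ βy * ((v22 - v12) - (v11 - v12 - v21 + v22) * x) :=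
        mul_nonneg hβy.le (by linarith)
      linarith
    left
    exact ⟨(div_lt_iff₀ hk2).mpr (by linarith), hcase⟩
  · -- y = y_mix : contradiction
    exfalso
    have hc : (u11 - u12 - u21 + u22) * y = u22 - u12 := by
      have := (div_eq_iff (ne_of_gt hk1)).mp hcase
      linarith
    have hLx : Real.log (1 / x - 1) = 0 := by
      have h0 : αx * Real.log (1 / x - 1) = 0 := by rw [hEx]; rw [show (u22 - u12) - (u11 - u12 - u21 + u22) * y = 0 by linarith]; ring
      exact (mul_eq_zero.mp h0).resolve_left (ne_of_gt hαx)
    have hx12 : x = 1 / 2 := qre_aux_zero_log x hx0 hx1 hLx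
    have hc2 : 0 < (v22 - v12) - (v11 - v12 - v21 + v22) * x := by
      have : (v11 - v12 - v21 + v22) * x < v22 - v12 := by
        rw [hx12]
        have := (lt_div_iff₀ hk2).mp hxmix
        linarith
      linarith
    have hLy : 0 < Real.log (1 / y - 1) := by
      by_contra h
      push_neg at h
      have h1 : αy * Real.log (1 / y - 1) ≤ 0 := mul_nonpos_of_nonneg_of_nonpos hαy.le h
      have h2 : 0 < βy * ((v22 - v12) - (v11 - v12 - v21 + v22) * x) := mul_pos hβy hc2
      linarith
    have hy12 : y < 1 / 2 := qre_aux_pos_log y hy0 hy1 hLy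
    have : 1 / 2 < y := lt_of_lt_of_le hymix (le_of_eq hcase)
    linarith
  · -- y < y_mix : second branch
    have hc : (u11 - u12 - u21 + u22) * y < u22 - u12 := by
      have := (lt_div_iff₀ hk1).mp hcase
      linarith
    have hLx : 0 < Real.log (1 / x - 1) := by
      by_contra h
      push_neg at h
      have h1 : αx * Real.log (1 / x - 1) ≤ 0 := mul_nonpos_of_nonneg_of_nonpos hαx.le h
      have h2 : 0 < βx * ((u22 - u12) - (u11 - u12 - u21 + u22) * y) := mul_pos hβx (by linarith)
      linarith
    have hx12 : x < 1 / 2 := qre_aux_pos_log x hx0 hx1 hLx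
    have hc2 : (v11 - v12 - v21 + v22) * x < v22 - v12 := by
      have hxm : x < (v22 - v12) / (v11 - v12 - v21 + v22) := lt_trans hx12 hxmix
      have := (lt_div_iff₀ hk2).mp hxm
      linarith
    have hLy : 0 < Real.log (1 / y - 1) := by
      by_contra h
      push_neg at h
      have h1 : αy * Real.log (1 / y - 1) ≤ 0 := mul_nonpos_of_nonneg_of_nonpos hαy.le h
      have h2 : 0 < βy * ((v22 - v12) - (v11 - v12 - v21 + v22) * x) := mul_pos hβy (by linarith)
      linarith
    have hy12 : y < 1 / 2 := qre_aux_pos_log y hy0 hy1 hLy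
    right
    exact ⟨hx12, hy12⟩
end

section
/- Let (u, v) be a 2×2 coordination game with mixed-equilibrium coordinates x_mix, y_mix, let α_x, β_x, α_y, β_y > 0, and let (x, y) ∈ (0,1)² be a QRE of the game for these parameters. Assume x_mix + y_mix > 1, x_mix > 1/2, and y_mix ≤ 1/2. Then one of the following holds: (x ≤ 1/2 and y ≤ y_mix), or (1/2 ≤ x ≤ x_mix and y_mix ≤ y ≤ 1/2), or (x ≥ x_mix and y ≥ y_mix). -/
open Real

set_option maxHeartbeats 1600000 in
/-- **Geometric locus of QRE in 2×2 coordination games, case (ii).**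
In a 2×2 coordination game with fully mixed equilibrium coordinates
`x_mix = (v22 − v12)/(v11 − v12 − v21 + v22)` and
`y_mix = (u22 − u12)/(u11 − u12 − u21 + u22)`, if `x_mix + y_mix > 1`,
`x_mix > 1/2` and `y_mix ≤ 1/2`, then every QRE `(x, y) ∈ (0,1)²` satisfies
one of: `x ≤ 1/2 ∧ y ≤ y_mix`, or `1/2 ≤ x ≤ x_mix ∧ y_mix ≤ y ≤ 1/2`, or
`x ≥ x_mix ∧ y ≥ y_mix`. -/
theorem qre_location_case_ii
    (u11 u12 u21 u22 v11 v12 v21 v22 : ℝ)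
    (hu1 : u11 > u21) (hu2 : u22 > u12) (hv1 : v11 > v21) (hv2 : v22 > v12)
    (αx βx αy βy : ℝ) (hαx : 0 < αx) (hβx : 0 < βx) (hαy : 0 < αy) (hβy : 0 < βy)
    (x y : ℝ) (hx0 : 0 < x) (hx1 : x < 1) (hy0 : 0 < y) (hy1 : y < 1)
    (hQREx : βx * (y * (u11 - u21) + (1 - y) * (u12 - u22)) + αx * Real.log (1 / x - 1) = 0)
    (hQREy : βy * (x * (v11 - v21) + (1 - x) * (v12 - v22)) + αy * Real.log (1 / y - 1) = 0)
    (hsum : (v22 - v12) / (v11 - v12 - v21 + v22) + (u22 - u12) / (u11 - u12 - u21 + u22) > 1)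
    (hxmix : (v22 - v12) / (v11 - v12 - v21 + v22) > 1 / 2)
    (hymix : (u22 - u12) / (u11 - u12 - u21 + u22) ≤ 1 / 2) :
    (x ≤ 1 / 2 ∧ y ≤ (u22 - u12) / (u11 - u12 - u21 + u22)) ∨
    (1 / 2 ≤ x ∧ x ≤ (v22 - v12) / (v11 - v12 - v21 + v22) ∧
      (u22 - u12) / (u11 - u12 - u21 + u22) ≤ y ∧ y ≤ 1 / 2) ∨
    (x ≥ (v22 - v12) / (v11 - v12 - v21 + v22) ∧ y ≥ (u22 - u12) / (u11 - u12 - u21 + u22)) := by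
  have hk1 : (0:ℝ) < u11 - u12 - u21 + u22 := by linarith
  have hk2 : (0:ℝ) < v11 - v12 - v21 + v22 := by linarith
  have hx1' : 0 < 1 / x - 1 := by
    have : 1 < 1 / x := one_lt_one_div hx0 hx1
    linarith
  have hy1' : 0 < 1 / y - 1 := by
    have : 1 < 1 / y := one_lt_one_div hy0 hy1
    linarith
  have hEx : βx * (y * (u11 - u12 - u21 + u22) - (u22 - u12))
      + αx * Real.log (1 / x - 1) = 0 := by linear_combination hQREx
  have hEy : βy * (x * (v11 - v12 - v21 + v22) - (v22 - v12))
      + αy * Real.log (1 / y - 1) = 0 := by linear_combination hQREy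
  have A : x ≤ 1 / 2 → y ≤ (u22 - u12) / (u11 - u12 - u21 + u22) := by
    intro h
    have h2 : (1:ℝ) ≤ 1 / x - 1 := by
      have : (2:ℝ) ≤ 1 / x := by
        rw [le_div_iff₀ hx0]; linarith
      linarith
    have hL : 0 ≤ Real.log (1 / x - 1) := Real.log_nonneg h2
    rw [le_div_iff₀ hk1]
    nlinarith
  have B : 1 / 2 ≤ x → (u22 - u12) / (u11 - u12 - u21 + u22) ≤ y := by
    intro h
    have h2 : 1 / x - 1 ≤ 1 := by
      have : 1 / x ≤ 2 := by
        rw [div_le_iff₀ hx0]; linarith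
      linarith
    have hL : Real.log (1 / x - 1) ≤ 0 := Real.log_nonpos (le_of_lt hx1') h2
    rw [div_le_iff₀ hk1]
    nlinarith
  have C : y ≤ 1 / 2 → x ≤ (v22 - v12) / (v11 - v12 - v21 + v22) := by
    intro h
    have h2 : (1:ℝ) ≤ 1 / y - 1 := by
      have : (2:ℝ) ≤ 1 / y := by
        rw [le_div_iff₀ hy0]; linarith
      linarith
    have hL : 0 ≤ Real.log (1 / y - 1) := Real.log_nonneg h2
    rw [le_div_iff₀ hk2]
    nlinarith
  have D : 1 / 2 ≤ y → (v22 - v12) / (v11 - v12 - v21 + v22) ≤ x := by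
    intro h
    have h2 : 1 / y - 1 ≤ 1 := by
      have : 1 / y ≤ 2 := by
        rw [div_le_iff₀ hy0]; linarith
      linarith
    have hL : Real.log (1 / y - 1) ≤ 0 := Real.log_nonpos (le_of_lt hy1') h2
    rw [div_le_iff₀ hk2]
    nlinarith
  rcases le_or_gt x (1 / 2) with hx | hx
  · exact Or.inl ⟨hx, A hx⟩
  · rcases le_or_gt y (1 / 2) with hy | hy
    · exact Or.inr (Or.inl ⟨le_of_lt hx, C hy, B (le_of_lt hx), hy⟩)
    · exact Or.inr (Or.inr ⟨D (le_of_lt hy), B (le_of_lt hx)⟩)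
end

section
/- Let (u, v) be a 2×2 coordination game that is symmetric, i.e., v_{ij} = u_{ji} for all i, j ∈ {1,2}, with mixed-equilibrium coordinate x_mix (= y_mix by symmetry), and let α_x, β_x, α_y, β_y > 0. Then there is no symmetric QRE (x, x) with 1/2 < x < x_mix; that is, no x ∈ (0,1) with 1/2 < x < x_mix such that (x, x) satisfies the QRE equations. -/
open Real

/-- **No symmetric QRE strictly between 1/2 and `x_mix` in symmetric 2×2
coordination games.** In a symmetric 2×2 coordination game (`u₂ = u₁ᵀ`, i.e.,
with the own-action-first convention the payoff `v i j` of player 2 when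
playing `i` against `j` equals `u i j`) with mixed equilibrium coordinate
`x_mix = y_mix = (u22 − u12)/(u11 − u12 − u21 + u22)`, there is no symmetric
QRE `(x, x)` with `1/2 < x < x_mix`. -/
theorem no_symmetric_qre_between_half_and_mix
    (u11 u12 u21 u22 : ℝ)
    (hu1 : u11 > u21) (hu2 : u22 > u12)
    (αx βx αy βy : ℝ) (hαx : 0 < αx) (hβx : 0 < βx) (hαy : 0 < αy) (hβy : 0 < βy) :
    ¬ ∃ x : ℝ, 0 < x ∧ x < 1 ∧ 1 / 2 < x ∧
      x < (u22 - u12) / (u11 - u12 - u21 + u22) ∧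
      -- QRE equation of player 1 at the symmetric profile (x, x)
      βx * (x * (u11 - u21) + (1 - x) * (u12 - u22)) + αx * Real.log (1 / x - 1) = 0 ∧
      -- QRE equation of player 2 at the symmetric profile (x, x), with v = u
      βy * (x * (u11 - u21) + (1 - x) * (u12 - u22)) + αy * Real.log (1 / x - 1) = 0 := by
  rintro ⟨x, hx0, hx1, hxh, hxm, heq, -⟩
  have hk : 0 < u11 - u12 - u21 + u22 := by linarith
  have hE : x * (u11 - u21) + (1 - x) * (u12 - u22) < 0 := by
    have := (lt_div_iff₀ hk).mp hxm
    nlinarith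
  have hlog : Real.log (1 / x - 1) < 0 := by
    apply Real.log_neg
    · have : 1 < 1 / x := by rw [lt_div_iff₀ hx0]; linarith
      linarith
    · have : 1 / x < 2 := (div_lt_iff₀ hx0).mpr (by linarith)
      linarith
  nlinarith [mul_pos hβx (neg_pos.mpr hE), mul_pos hαx (neg_pos.mpr hlog)]
end

section
/- Let ι be a nonempty finite type, r : ι → ℝ, α > 0, β > 0, δ := α/β, and let x : ι → ℝ satisfy x_i > 0 for all i and ∑_i x_i = 1. Then the following are equivalent: (1) for every i, β·(r_i − ∑_j x_j r_j) = α·(ln x_i − ∑_j x_j ln x_j) (i.e., x is an interior fixed point of the SQL vector field for rewards r); (2) for every i, x_i = exp(r_i/δ) / ∑_j exp(r_j/δ) (i.e., x is the softmax/Boltzmann distribution of r with temperature δ). -/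
/-!
Since `∑ x = 1`, the fixed-point condition says that `β r_i − α ln x_i` equals its own
`x`-weighted mean for every `i`, i.e. that it is constant. So `ln x_i = r_i / δ + c` for some
constant `c`, which makes `x` proportional to `exp (r / δ)`; the normalisation `∑ x = 1` then
pins the constant to `−ln ∑_j exp (r_j / δ)`.
-/

open Real Finset

theorem forall_eq_weighted_sum_iff_exists_const {ι : Type*} [Fintype ι] {w : ι → ℝ}
    (hw : ∑ i, w i = 1) (f : ι → ℝ) :
    (∀ i, f i = ∑ j, w j * f j) ↔ ∃ c, ∀ i, f i = c := by
  constructor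
  · exact fun h => ⟨_, h⟩
  · rintro ⟨c, hc⟩ i
    simp only [hc, ← sum_mul, hw, one_mul]

theorem exists_log_eq_add_const_iff_eq_softmax {ι : Type*} [Fintype ι] {x : ι → ℝ}
    (hxpos : ∀ i, 0 < x i) (hxsum : ∑ i, x i = 1) (s : ι → ℝ) :
    (∃ c, ∀ i, log (x i) = s i + c) ↔ ∀ i, x i = exp (s i) / ∑ j, exp (s j) := by
  constructor
  · rintro ⟨c, hc⟩
    have hx : ∀ i, x i = exp (s i) * exp c := fun i => by
      rw [← exp_add, ← hc i, exp_log (hxpos i)]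
    have hnorm : (∑ j, exp (s j)) * exp c = 1 := by
      rw [sum_mul, ← hxsum]
      exact sum_congr rfl fun j _ => (hx j).symm
    intro i
    rw [hx i, eq_div_iff (left_ne_zero_of_mul_eq_one hnorm)]
    linear_combination exp (s i) * hnorm
  · intro h
    refine ⟨-log (∑ j, exp (s j)), fun i => ?_⟩
    have hS : 0 < ∑ j, exp (s j) := sum_pos (fun j _ => exp_pos (s j)) ⟨i, mem_univ i⟩
    rw [h i, log_div (exp_ne_zero _) hS.ne', log_exp, sub_eq_add_neg]

theorem sql_fixed_point_iff_softmax_general {ι : Type*} [Fintype ι]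
    (r : ι → ℝ) (α β : ℝ) (hα : 0 < α)
    (x : ι → ℝ) (hxpos : ∀ i, 0 < x i) (hxsum : ∑ i, x i = 1) :
    (∀ i, β * (r i - ∑ j, x j * r j)
        = α * (Real.log (x i) - ∑ j, x j * Real.log (x j))) ↔
    (∀ i, x i = Real.exp (r i / (α / β)) / ∑ j, Real.exp (r j / (α / β))) := by
  have hmean : ∑ j, x j * (β * r j - α * log (x j))
      = β * ∑ j, x j * r j - α * ∑ j, x j * log (x j) := by
    simp only [mul_sub, sum_sub_distrib, mul_left_comm _ β, mul_left_comm _ α, ← mul_sum]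
  have hfixed : (∀ i, β * (r i - ∑ j, x j * r j)
        = α * (log (x i) - ∑ j, x j * log (x j))) ↔
      ∀ i, β * r i - α * log (x i) = ∑ j, x j * (β * r j - α * log (x j)) := by
    refine forall_congr' fun i => ?_
    rw [hmean]
    constructor <;> intro h <;> linarith
  have hconst : (∃ c, ∀ i, β * r i - α * log (x i) = c) ↔
      ∃ c, ∀ i, log (x i) = r i / (α / β) + c := by
    refine ⟨fun ⟨c, hc⟩ => ⟨-c / α, fun i => ?_⟩, fun ⟨c, hc⟩ => ⟨-α * c, fun i => ?_⟩⟩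
    · rw [← hc i]
      field_simp
      ring
    · rw [hc i]
      field_simp
      ring
  rw [hfixed, forall_eq_weighted_sum_iff_exists_const hxsum, hconst,
    exists_log_eq_add_const_iff_eq_softmax hxpos hxsum]

/-- **Interior fixed points of the SQL vector field are softmax (Boltzmann)
distributions.** For rewards `r`, parameters `α, β > 0` and exploration rate
`δ = α/β`, a strictly positive choice distribution `x` satisfies
`β (r_i − ∑_j x_j r_j) = α (ln x_i − ∑_j x_j ln x_j)` for every `i` iff
`x_i = exp(r_i/δ) / ∑_j exp(r_j/δ)` for every `i`. -/
theorem sql_fixed_point_iff_softmax {ι : Type*} [Fintype ι] [Nonempty ι]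
    (r : ι → ℝ) (α β : ℝ) (hα : 0 < α) (hβ : 0 < β)
    (x : ι → ℝ) (hxpos : ∀ i, 0 < x i) (hxsum : ∑ i, x i = 1) :
    (∀ i, β * (r i - ∑ j, x j * r j)
        = α * (Real.log (x i) - ∑ j, x j * Real.log (x j))) ↔
    (∀ i, x i = Real.exp (r i / (α / β)) / ∑ j, Real.exp (r j / (α / β))) :=
  sql_fixed_point_iff_softmax_general r α β hα x hxpos hxsum
end
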